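/- arXiv:1907.01543 — 6 statements merged into one kernel-verified Lean document; each statement's English description precedes it below -/
import Mathlib

section
/- Let f : ℝ^p → ℝ ∪ {+∞} be a proper lower semi-continuous function that is L-weakly convex (i.e. x ↦ f(x) + (L/2)‖x‖² is convex), and let λ > 0 satisfy λL < 1. Then the Moreau envelope f_λ is everywhere differentiable and its gradient is Lipschitz continuous with constant (1/λ) + 1/(λ(1 − λL)). -/
open scoped RealInnerProductSpace
open Filter Set Metric Topology

/-!
As `f + (L/2)‖·‖²` is convex, the Moreau objective `z ↦ f z + ‖x - z‖² / (2λ)` is strongly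
convex with modulus `1/λ - L > 0`. Together with lower semicontinuity this forces quadratic
growth at infinity, hence a minimiser `u x` (the proximal point), and the objective exceeds its
minimum by at least `(1/λ - L)/2 · ‖z - u x‖²`. Adding these inequalities for two base points
shows that `u` is `1/(1 - λL)`-Lipschitz. The envelope lies below the quadratic model
`F x + ⟪(x - u x)/λ, y - x⟫ + ‖y - x‖² / (2λ)`, and a function with such an upper model whose
slope is Lipschitz is differentiable, with the slope as gradient.
-/

lemma EReal.coe_toReal_add_coe {x : EReal} (hx : x ≠ ⊤) (h'x : x ≠ ⊥) (a : ℝ) :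
    ((x.toReal + a : ℝ) : EReal) = x + a := by
  rw [EReal.coe_add, EReal.coe_toReal hx h'x]

lemma LowerSemicontinuous.exists_forall_le_of_le_of_dist_lt {α β : Type*} [PseudoMetricSpace α]
    [ProperSpace α] [LinearOrder β] [TopologicalSpace β] {h : α → β}
    (hh : LowerSemicontinuous h) (x₀ : α) {R : ℝ} (hR : 0 ≤ R)
    (hout : ∀ z, R < dist z x₀ → h x₀ ≤ h z) : ∃ u, ∀ z, h u ≤ h z := by
  obtain ⟨u, -, hu⟩ := (hh.lowerSemicontinuousOn _).exists_isMinOn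
    ⟨x₀, mem_closedBall_self hR⟩ (isCompact_closedBall x₀ R)
  refine ⟨u, fun z => ?_⟩
  by_cases hz : dist z x₀ ≤ R
  · exact hu hz
  · exact (hu (mem_closedBall_self hR)).trans (hout z (not_le.1 hz))

section Convexity

variable {E : Type*}

lemma convexOn_toReal_add [AddCommGroup E] [Module ℝ E] {f : E → EReal} {q : E → ℝ}
    (hbot : ∀ x, f x ≠ ⊥)
    (hf : ∀ x y : E, ∀ a b : ℝ, 0 ≤ a → 0 ≤ b → a + b = 1 →
      f (a • x + b • y) + (q (a • x + b • y) : EReal) ≤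
        (a : EReal) * (f x + (q x : EReal)) + (b : EReal) * (f y + (q y : EReal))) :
    ConvexOn ℝ {x | f x ≠ ⊤} fun x => (f x).toReal + q x := by
  have key : ∀ x, f x ≠ ⊤ → ∀ y, f y ≠ ⊤ → ∀ a b : ℝ, 0 ≤ a → 0 ≤ b → a + b = 1 →
      f (a • x + b • y) ≠ ⊤ ∧ (f (a • x + b • y)).toReal + q (a • x + b • y) ≤
        a * ((f x).toReal + q x) + b * ((f y).toReal + q y) := by
    intro x hx y hy a b ha hb hab
    have h := hf x y a b ha hb hab
    rw [← EReal.coe_toReal_add_coe hx (hbot x), ← EReal.coe_toReal_add_coe hy (hbot y),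
      ← EReal.coe_mul, ← EReal.coe_mul, ← EReal.coe_add] at h
    have hxy : f (a • x + b • y) ≠ ⊤ := by
      rintro htop
      rw [htop, EReal.top_add_coe] at h
      exact (EReal.coe_lt_top _).not_ge h
    rw [← EReal.coe_toReal_add_coe hxy (hbot _)] at h
    exact ⟨hxy, EReal.coe_le_coe_iff.1 h⟩
  exact ⟨fun x hx y hy a b ha hb hab => (key x hx y hy a b ha hb hab).1,
    fun x hx y hy a b ha hb hab => (key x hx y hy a b ha hb hab).2⟩

variable [NormedAddCommGroup E]

lemma ConvexOn.strongConvexOn_add_mul_norm_sub_sq [InnerProductSpace ℝ E] {s : Set E}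
    {φ : E → ℝ} {L : ℝ} (hφ : ConvexOn ℝ s fun z => φ z + L / 2 * ‖z‖ ^ 2) (c : ℝ) (x : E) :
    StrongConvexOn s (2 * c - L) fun z => φ z + c * ‖x - z‖ ^ 2 := by
  rw [strongConvexOn_iff_convex]
  refine ((hφ.add (((-(2 * c)) • innerₛₗ ℝ x).convexOn hφ.1)).add_const (c * ‖x‖ ^ 2)).congr
    fun z _ => ?_
  simp only [Pi.add_apply, LinearMap.smul_apply, innerₛₗ_apply_apply, smul_eq_mul, norm_sub_sq_real]
  ring

variable [NormedSpace ℝ E] {s : Set E} {m : ℝ} {g : E → ℝ}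

lemma StrongConvexOn.add_mul_norm_sub_sq_le_of_isMinOn (hg : StrongConvexOn s m g) {u z : E}
    (hu : u ∈ s) (hmin : IsMinOn g s u) (hz : z ∈ s) :
    g u + m / 2 * ‖z - u‖ ^ 2 ≤ g z := by
  have hseg : ∀ t ∈ Ioo (0 : ℝ) 1, g u + (1 - t) * (m / 2 * ‖z - u‖ ^ 2) ≤ g z := by
    rintro t ⟨ht₀, ht₁⟩
    have hconv := hg.2 hu hz (by linarith : (0 : ℝ) ≤ 1 - t) ht₀.le (sub_add_cancel 1 t)
    have hle : g u ≤ g ((1 - t) • u + t • z) :=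
      hmin (hg.1 hu hz (by linarith : (0 : ℝ) ≤ 1 - t) ht₀.le (sub_add_cancel 1 t))
    rw [smul_eq_mul, smul_eq_mul, norm_sub_rev] at hconv
    have : t * (g u + (1 - t) * (m / 2 * ‖z - u‖ ^ 2)) ≤ t * g z := by nlinarith
    exact le_of_mul_le_mul_left this ht₀
  have hlim : Tendsto (fun t : ℝ => g u + (1 - t) * (m / 2 * ‖z - u‖ ^ 2)) (𝓝[>] 0)
      (𝓝 (g u + (1 - 0) * (m / 2 * ‖z - u‖ ^ 2))) :=
    ((continuous_const.add ((continuous_const.sub continuous_id).mul continuous_const)).tendsto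
      0).mono_left nhdsWithin_le_nhds
  simpa using le_of_tendsto hlim (eventually_of_mem (Ioo_mem_nhdsGT zero_lt_one) hseg)

lemma StrongConvexOn.le_of_one_le_norm_sub (hg : StrongConvexOn s m g) {x₀ z : E} {M : ℝ}
    (hx₀ : x₀ ∈ s) (hz : z ∈ s) (hM : ∀ y ∈ s, ‖y - x₀‖ ≤ 1 → M ≤ g y)
    (hr : 1 ≤ ‖z - x₀‖) :
    g x₀ + ‖z - x₀‖ * (m / 2 * (‖z - x₀‖ - 1) - (g x₀ - M)) ≤ g z := by
  -- compare with the point of the segment `[x₀, z]` at distance `1` from `x₀`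
  set r := ‖z - x₀‖
  have hr₀ : 0 < r := one_pos.trans_le hr
  have ht : 0 ≤ 1 - r⁻¹ := sub_nonneg.2 (inv_le_one_of_one_le₀ hr)
  have hy : ‖((1 - r⁻¹) • x₀ + r⁻¹ • z) - x₀‖ = 1 := by
    rw [show (1 - r⁻¹) • x₀ + r⁻¹ • z - x₀ = r⁻¹ • (z - x₀) by module, norm_smul,
      Real.norm_of_nonneg (inv_nonneg.2 hr₀.le), inv_mul_cancel₀ hr₀.ne']
  have hMy := hM _ (hg.1 hx₀ hz ht (inv_nonneg.2 hr₀.le) (sub_add_cancel 1 r⁻¹)) hy.le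
  have hconv := hg.2 hx₀ hz ht (inv_nonneg.2 hr₀.le) (sub_add_cancel 1 r⁻¹)
  simp only [smul_eq_mul, norm_sub_rev x₀ z] at hconv
  have : r * M ≤ (r - 1) * g x₀ + g z - m / 2 * (r - 1) * r := calc
    r * M ≤ r * ((1 - r⁻¹) * g x₀ + r⁻¹ * g z - (1 - r⁻¹) * r⁻¹ * (m / 2 * r ^ 2)) :=
      mul_le_mul_of_nonneg_left (hMy.trans hconv) hr₀.le
    _ = (r - 1) * g x₀ + g z - m / 2 * (r - 1) * r := by field_simp
  nlinarith

end Convexity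

section Minimizer

variable {E : Type*} [NormedAddCommGroup E] [NormedSpace ℝ E] [ProperSpace E]

lemma exists_forall_add_le_of_strongConvexOn {f : E → EReal} {q : E → ℝ} {m : ℝ}
    (hf : LowerSemicontinuous f) (hbot : ∀ x, f x ≠ ⊥) (hproper : ∃ x, f x ≠ ⊤)
    (hq : Continuous q) (hm : 0 < m)
    (hconv : StrongConvexOn {x | f x ≠ ⊤} m fun x => (f x).toReal + q x) :
    ∃ u, f u ≠ ⊤ ∧ ∀ z, f u + q u ≤ f z + q z := by
  obtain ⟨x₀, hx₀⟩ := hproper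
  set g : E → ℝ := fun x => (f x).toReal + q x
  set h : E → EReal := fun x => f x + q x
  have hcoe : ∀ x, f x ≠ ⊤ → h x = g x := fun x hx =>
    (EReal.coe_toReal_add_coe hx (hbot x) _).symm
  have htop : ∀ x, f x = ⊤ → h x = ⊤ := fun x hx => by simp only [h, hx, EReal.top_add_coe]
  have hdom : ∀ x, h x ≤ h x₀ → f x ≠ ⊤ := fun x hx hfx => by
    rw [htop x hfx, hcoe x₀ hx₀, top_le_iff] at hx
    exact EReal.coe_ne_top _ hx
  have hlsc : LowerSemicontinuous h :=
    hf.add' (continuous_coe_real_ereal.comp hq).lowerSemicontinuous fun x =>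
      EReal.continuousAt_add (Or.inr (EReal.coe_ne_bot _)) (Or.inr (EReal.coe_ne_top _))
  -- a minimiser `w` over the unit ball bounds `g` below there, and the growth bound then keeps
  -- `g` above `g x₀` outside a larger ball
  obtain ⟨w, -, hwmin⟩ := (hlsc.lowerSemicontinuousOn _).exists_isMinOn
    ⟨x₀, mem_closedBall_self zero_le_one⟩ (isCompact_closedBall x₀ 1)
  have hw : f w ≠ ⊤ := hdom w (hwmin (mem_closedBall_self zero_le_one))
  have hM : ∀ y ∈ {x | f x ≠ ⊤}, ‖y - x₀‖ ≤ 1 → g w ≤ g y := fun y hy hy₁ => by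
    have : h w ≤ h y := hwmin (mem_closedBall_iff_norm.2 hy₁)
    rwa [hcoe y hy, hcoe w hw, EReal.coe_le_coe_iff] at this
  have hδ : 0 ≤ g x₀ - g w := by
    have : h w ≤ h x₀ := hwmin (mem_closedBall_self zero_le_one)
    rw [hcoe x₀ hx₀, hcoe w hw, EReal.coe_le_coe_iff] at this
    linarith
  obtain ⟨u, hu⟩ := hlsc.exists_forall_le_of_le_of_dist_lt x₀
    (R := 1 + 2 * (g x₀ - g w) / m) (by positivity) fun z hz => by
      by_cases hfz : f z = ⊤
      · exact htop z hfz ▸ le_top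
      rw [hcoe x₀ hx₀, hcoe z hfz, EReal.coe_le_coe_iff]
      rw [dist_eq_norm] at hz
      have hR : 0 ≤ 2 * (g x₀ - g w) / m := by positivity
      have hmr : 2 * (g x₀ - g w) < m * (‖z - x₀‖ - 1) := (div_lt_iff₀' hm).1 (by linarith)
      have := hconv.le_of_one_le_norm_sub hx₀ hfz hM (by linarith)
      nlinarith [norm_nonneg (z - x₀)]
  exact ⟨u, hdom u (hu x₀), hu⟩

end Minimizer

section InnerProduct

variable {E : Type*} [NormedAddCommGroup E] [InnerProductSpace ℝ E]

lemma hasGradientAt_of_le_add_inner_add_mul_norm_sq [CompleteSpace E] {G : E → ℝ} {v : E → E}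
    {C K : ℝ} (hG : ∀ x y, G y ≤ G x + ⟪v x, y - x⟫ + C * ‖y - x‖ ^ 2)
    (hv : ∀ x y, ‖v x - v y‖ ≤ K * ‖x - y‖) (x : E) :
    HasGradientAt G (v x) x := by
  rw [hasGradientAt_iff_isLittleO]
  refine Asymptotics.IsBigO.trans_isLittleO ?_ (Asymptotics.isLittleO_pow_sub_sub x one_lt_two)
  refine Asymptotics.IsBigO.of_bound (|C| + |K|) (Eventually.of_forall fun y => ?_)
  have hup := hG x y
  have hlow := hG y x
  have hsplit : ⟪v y, x - y⟫ + ⟪v x, y - x⟫ = -⟪v y - v x, y - x⟫ := by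
    rw [← neg_sub y x, inner_neg_right, inner_sub_left]
    ring
  have hinner : -(K * ‖y - x‖ ^ 2) ≤ ⟪v y - v x, y - x⟫ := by
    have := (abs_le.1 (abs_real_inner_le_norm (v y - v x) (y - x))).1
    have := mul_le_mul_of_nonneg_right (hv y x) (norm_nonneg (y - x))
    nlinarith
  rw [norm_sub_rev x y] at hlow
  rw [Real.norm_of_nonneg (sq_nonneg _), Real.norm_eq_abs, abs_le]
  have hsq := sq_nonneg ‖y - x‖
  constructor <;> nlinarith [le_abs_self C, neg_abs_le C, le_abs_self K, neg_abs_le K]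

lemma norm_smul_sub_sub_smul_sub_le {u : E → E} {a K : ℝ} (ha : 0 ≤ a)
    (hu : ∀ x y, ‖u x - u y‖ ≤ K * ‖x - y‖) (x y : E) :
    ‖a • (x - u x) - a • (y - u y)‖ ≤ a * (1 + K) * ‖x - y‖ := by
  rw [← smul_sub, norm_smul, Real.norm_of_nonneg ha, mul_assoc,
    show x - u x - (y - u y) = (x - y) - (u x - u y) by abel]
  gcongr
  linarith [norm_sub_le (x - y) (u x - u y), hu x y]

variable {φ : E → ℝ} {u : E → E} {c : ℝ}

lemma norm_prox_sub_prox_le (hc : 0 ≤ c) {ν : ℝ} (hν : 0 < ν)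
    (hu : ∀ x y, φ (u x) + c * ‖x - u x‖ ^ 2 + ν * ‖u y - u x‖ ^ 2 ≤
      φ (u y) + c * ‖x - u y‖ ^ 2) (x y : E) :
    ‖u x - u y‖ ≤ c / ν * ‖x - y‖ := by
  have h₁ := hu x y
  have h₂ := hu y x
  have hfour : ‖x - u y‖ ^ 2 - ‖x - u x‖ ^ 2 + ‖y - u x‖ ^ 2 - ‖y - u y‖ ^ 2 =
      2 * ⟪x - y, u x - u y⟫ := by
    simp only [norm_sub_sq_real, inner_sub_left, inner_sub_right]
    ring
  have hcs := real_inner_le_norm (x - y) (u x - u y)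
  rw [norm_sub_rev (u y)] at h₁
  have hsq : ν * ‖u x - u y‖ ^ 2 ≤ c * (‖x - y‖ * ‖u x - u y‖) := by nlinarith
  rcases (norm_nonneg (u x - u y)).eq_or_lt with h | h
  · rw [← h]
    positivity
  · rw [div_mul_eq_mul_div, le_div_iff₀ hν]
    nlinarith

lemma prox_value_le_add_inner_add_mul_norm_sq
    (hu : ∀ x y, φ (u y) + c * ‖y - u y‖ ^ 2 ≤ φ (u x) + c * ‖y - u x‖ ^ 2) (x y : E) :
    φ (u y) + c * ‖y - u y‖ ^ 2 ≤
      φ (u x) + c * ‖x - u x‖ ^ 2 + ⟪(2 * c) • (x - u x), y - x⟫ + c * ‖y - x‖ ^ 2 := by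
  have h := hu x y
  rw [show y - u x = (x - u x) + (y - x) by abel, norm_add_sq_real] at h
  rw [real_inner_smul_left]
  linarith

end InnerProduct

/-- Lemma 1(b): For a proper l.s.c. `L`-weakly convex
`f : ℝ^p → ℝ ∪ {+∞}` and `0 < λ` with `λL < 1`, the Moreau envelope `f_λ` is
(real-valued and) everywhere differentiable, with gradient Lipschitz of constant
`1/λ + 1/(λ(1 − λL))`. -/
theorem stmt_2 {p : ℕ} (f : EuclideanSpace ℝ (Fin p) → EReal) (L lam : ℝ)
    (hlam : 0 < lam) (hlamL : lam * L < 1)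
    (hproper : ∃ x, f x ≠ ⊤) (hbot : ∀ x, f x ≠ ⊥)
    (hlsc : LowerSemicontinuous f)
    (hwc : ∀ x y : EuclideanSpace ℝ (Fin p), ∀ a b : ℝ, 0 ≤ a → 0 ≤ b → a + b = 1 →
      f (a • x + b • y) + ((L / 2 * ‖a • x + b • y‖ ^ 2 : ℝ) : EReal) ≤
        (a : EReal) * (f x + ((L / 2 * ‖x‖ ^ 2 : ℝ) : EReal)) +
          (b : EReal) * (f y + ((L / 2 * ‖y‖ ^ 2 : ℝ) : EReal))) :
    ∃ F : EuclideanSpace ℝ (Fin p) → ℝ,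
      (∀ x, (F x : EReal) = ⨅ x', f x' + ((1 / (2 * lam) * ‖x - x'‖ ^ 2 : ℝ) : EReal)) ∧
      Differentiable ℝ F ∧
      ∀ x y, ‖gradient F x - gradient F y‖ ≤ (1 / lam + 1 / (lam * (1 - lam * L))) * ‖x - y‖ := by
  set c := 1 / (2 * lam)
  have hc : 0 < c := by positivity
  have hm : 0 < 2 * c - L := by
    rw [show 2 * c - L = (1 - lam * L) / lam by simp only [c]; field_simp]
    exact div_pos (by linarith) hlam
  have hstrong := fun x => (convexOn_toReal_add (q := fun z => L / 2 * ‖z‖ ^ 2) hbot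
    hwc).strongConvexOn_add_mul_norm_sub_sq c x
  choose u hu_dom hu_min using fun x => exists_forall_add_le_of_strongConvexOn hlsc hbot
    hproper (q := fun z => c * ‖x - z‖ ^ 2) (by fun_prop) hm (hstrong x)
  set F := fun x => (f (u x)).toReal + c * ‖x - u x‖ ^ 2
  have hmin : ∀ x, IsMinOn (fun z => (f z).toReal + c * ‖x - z‖ ^ 2) {z | f z ≠ ⊤} (u x) :=
    fun x z hz => by
      have := hu_min x z
      rwa [← EReal.coe_toReal_add_coe (hu_dom x) (hbot _), ← EReal.coe_toReal_add_coe hz (hbot _),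
        EReal.coe_le_coe_iff] at this
  have hgrowth : ∀ x y, (f (u x)).toReal + c * ‖x - u x‖ ^ 2 + (2 * c - L) / 2 * ‖u y - u x‖ ^ 2 ≤
      (f (u y)).toReal + c * ‖x - u y‖ ^ 2 := fun x y =>
    (hstrong x).add_mul_norm_sub_sq_le_of_isMinOn (hu_dom x) (hmin x) (hu_dom y)
  have hv_lip := norm_smul_sub_sub_smul_sub_le (a := 2 * c) (by positivity)
    (norm_prox_sub_prox_le (φ := fun z => (f z).toReal) hc.le (half_pos hm) hgrowth)
  have hgrad : ∀ x, HasGradientAt F ((2 * c) • (x - u x)) x :=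
    hasGradientAt_of_le_add_inner_add_mul_norm_sq
      (prox_value_le_add_inner_add_mul_norm_sq (φ := fun z => (f z).toReal) fun x y =>
        hmin y (hu_dom x)) hv_lip
  have hconst : 2 * c * (1 + c / ((2 * c - L) / 2)) = 1 / lam + 1 / (lam * (1 - lam * L)) := by
    simp only [c]
    field_simp
  refine ⟨F, fun x => ?_, fun x => (hgrad x).differentiableAt, fun x y => ?_⟩
  · rw [EReal.coe_toReal_add_coe (hu_dom x) (hbot _)]
    exact le_antisymm (le_iInf (hu_min x)) (iInf_le _ _)
  · rw [(hgrad x).gradient, (hgrad y).gradient, ← hconst]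
    exact hv_lip x y
end

section
/- Let f : ℝ^p → ℝ ∪ {+∞} be a proper lower semi-continuous function that is L-weakly convex (i.e. x ↦ f(x) + (L/2)‖x‖² is convex), and let λ > 0 satisfy λL < 1. For every x ∈ ℝ^p, let x̂_λ(x) be the unique minimizer of x' ↦ f(x') + (1/(2λ))‖x − x'‖². Then the Moreau envelope f_λ is differentiable at x with ∇f_λ(x) = (x − x̂_λ(x))/λ, and the vector u = (x − x̂_λ(x))/λ is a Fréchet subgradient of f at x̂_λ(x); in particular min_{u ∈ ∂f(x̂_λ(x))} ‖u‖ ≤ (1/λ)‖x̂_λ(x) − x‖ = ‖∇f_λ(x)‖. -/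
/-!
Put `u = (x - x̂) / λ`. On the domain of `f`, the function `f + ‖x - ·‖² / (2λ)` is
`(1/λ - L)`-strongly convex and minimal at `x̂`, which gives the proximal inequality
`f y ≥ f x̂ + ⟪u, y - x̂⟫ - (L/2) ‖y - x̂‖²`; the Fréchet subgradient property follows at once.
Inserting this inequality into the infimum defining `f_λ z` and completing the square gives
`-(L / (2(1 - λL))) ‖z - x‖² ≤ f_λ z - f_λ x - ⟪u, z - x⟫ ≤ ‖z - x‖² / (2λ)`,
so `u` is the gradient of `f_λ` at `x`.
-/

open scoped InnerProductSpace
open Filter Topology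

theorem ne_top_of_forall_add_coe_le {α : Type*} {f : α → EReal} {q : α → ℝ} {a : α}
    (hproper : ∃ y, f y ≠ ⊤)
    (hmin : ∀ y, f a + (q a : EReal) ≤ f y + (q y : EReal)) : f a ≠ ⊤ := by
  obtain ⟨y, hy⟩ := hproper
  intro htop
  have h := hmin y
  rw [htop, EReal.top_add_coe] at h
  exact (EReal.add_lt_top hy (EReal.coe_ne_top _)).not_ge h

variable {E : Type*} [NormedAddCommGroup E]

theorem StrongConvexOn.add_sq_le_of_isMinOn [NormedSpace ℝ E] {s : Set E} {m : ℝ} {φ : E → ℝ}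
    {a y : E} (hφ : StrongConvexOn s m φ) (hmin : IsMinOn φ s a) (ha : a ∈ s) (hy : y ∈ s) :
    φ a + m / 2 * ‖y - a‖ ^ 2 ≤ φ y := by
  have hshrink : ∀ t : ℝ, 0 < t → t < 1 → φ a + (1 - t) * (m / 2 * ‖y - a‖ ^ 2) ≤ φ y := by
    intro t ht0 ht1
    have hconv := hφ.2 ha hy (by linarith : (0 : ℝ) ≤ 1 - t) ht0.le (by ring)
    have hle := hmin (hφ.1 ha hy (by linarith : (0 : ℝ) ≤ 1 - t) ht0.le (by ring))
    simp only [Set.mem_ofPred_eq, smul_eq_mul, norm_sub_rev a y] at hconv hle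
    nlinarith
  have hlim : Tendsto (fun t : ℝ => φ a + (1 - t) * (m / 2 * ‖y - a‖ ^ 2)) (𝓝[>] 0)
      (𝓝 (φ a + m / 2 * ‖y - a‖ ^ 2)) :=
    tendsto_nhdsWithin_of_tendsto_nhds (by simpa using (by fun_prop : Continuous
      fun t : ℝ => φ a + (1 - t) * (m / 2 * ‖y - a‖ ^ 2)).tendsto 0)
  refine le_of_tendsto hlim ?_
  filter_upwards [Ioo_mem_nhdsGT one_pos] with t ht using hshrink t ht.1 ht.2

variable [InnerProductSpace ℝ E]

theorem ConvexOn.strongConvexOn_add_sq_norm_sub {s : Set E} {g : E → ℝ} {L c : ℝ} (x : E)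
    (hg : ConvexOn ℝ s fun y => g y + L / 2 * ‖y‖ ^ 2) :
    StrongConvexOn s (c - L) fun y => g y + c / 2 * ‖x - y‖ ^ 2 := by
  rw [strongConvexOn_iff_convex]
  refine (hg.add ((((-c) • innerₛₗ ℝ x).convexOn hg.1).add_const (c / 2 * ‖x‖ ^ 2))).congr
    fun y _ => ?_
  simp only [Pi.add_apply, LinearMap.smul_apply, innerₛₗ_apply_apply, smul_eq_mul,
    norm_sub_sq_real]
  ring

theorem add_inner_sub_sq_le_of_isMinOn {s : Set E} {g : E → ℝ} {L lam : ℝ} {x a y : E}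
    (hg : ConvexOn ℝ s fun y => g y + L / 2 * ‖y‖ ^ 2)
    (hmin : IsMinOn (fun y => g y + 1 / (2 * lam) * ‖x - y‖ ^ 2) s a) (ha : a ∈ s) (hy : y ∈ s) :
    g a + ⟪(1 / lam) • (x - a), y - a⟫_ℝ - L / 2 * ‖y - a‖ ^ 2 ≤ g y := by
  have hsc := hg.strongConvexOn_add_sq_norm_sub (c := 1 / lam) x
  have := hsc.add_sq_le_of_isMinOn (by convert hmin using 4; ring) ha hy
  have hexp : ‖x - y‖ ^ 2 = ‖x - a‖ ^ 2 - 2 * ⟪x - a, y - a⟫_ℝ + ‖y - a‖ ^ 2 := by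
    rw [← norm_sub_sq_real]; congr 2; abel
  rw [hexp] at this
  rw [real_inner_smul_left]
  linarith

theorem hasGradientAt_of_sandwich [CompleteSpace E] {F : E → ℝ} {g x : E} {c a b : ℝ}
    (hlo : ∀ z, c + ⟪g, z - x⟫_ℝ - a * ‖z - x‖ ^ 2 ≤ F z)
    (hhi : ∀ z, F z ≤ c + ⟪g, z - x⟫_ℝ + b * ‖z - x‖ ^ 2) : HasGradientAt F g x := by
  have hFx : F x = c := le_antisymm (by simpa using hhi x) (by simpa using hlo x)
  rw [hasGradientAt_iff_isLittleO]
  refine (Asymptotics.IsBigO.of_bound (max a b) (Eventually.of_forall fun z => ?_)).trans_isLittleO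
    (Asymptotics.isLittleO_pow_sub_sub x one_lt_two)
  rw [Real.norm_eq_abs, norm_pow, norm_norm, abs_le, hFx]
  constructor <;> nlinarith [hlo z, hhi z, le_max_left a b, le_max_right a b, sq_nonneg ‖z - x‖]

theorem EReal.ne_top_and_toReal_add_le {e : EReal} {c R : ℝ} (he : e ≠ ⊥) (h : e + c ≤ R) :
    e ≠ ⊤ ∧ e.toReal + c ≤ R := by
  induction e using EReal.rec with
  | bot => exact absurd rfl he
  | coe e => exact ⟨EReal.coe_ne_top e, by exact_mod_cast h⟩
  | top => exact absurd (h.trans_lt (EReal.coe_lt_top R)) (by simp)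

theorem convexOn_toReal_add_sq {f : E → EReal} {L : ℝ} (hbot : ∀ x, f x ≠ ⊥)
    (hwc : ∀ x y : E, ∀ a b : ℝ, 0 ≤ a → 0 ≤ b → a + b = 1 →
      f (a • x + b • y) + ((L / 2 * ‖a • x + b • y‖ ^ 2 : ℝ) : EReal) ≤
        (a : EReal) * (f x + ((L / 2 * ‖x‖ ^ 2 : ℝ) : EReal)) +
          (b : EReal) * (f y + ((L / 2 * ‖y‖ ^ 2 : ℝ) : EReal))) :
    ConvexOn ℝ {y | f y ≠ ⊤} fun y => (f y).toReal + L / 2 * ‖y‖ ^ 2 := by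
  have key : ∀ x, f x ≠ ⊤ → ∀ y, f y ≠ ⊤ → ∀ a b : ℝ, 0 ≤ a → 0 ≤ b → a + b = 1 →
      f (a • x + b • y) ≠ ⊤ ∧ (f (a • x + b • y)).toReal + L / 2 * ‖a • x + b • y‖ ^ 2 ≤
        a * ((f x).toReal + L / 2 * ‖x‖ ^ 2) + b * ((f y).toReal + L / 2 * ‖y‖ ^ 2) := by
    intro x hx y hy a b ha hb hab
    refine EReal.ne_top_and_toReal_add_le (hbot _) ?_
    have h := hwc x y a b ha hb hab
    rw [← EReal.coe_toReal hx (hbot x), ← EReal.coe_toReal hy (hbot y)] at h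
    exact_mod_cast h
  exact ⟨fun x hx y hy a b ha hb hab => (key x hx y hy a b ha hb hab).1,
    fun x hx y hy a b ha hb hab => (key x hx y hy a b ha hb hab).2⟩

theorem add_coe_inner_sub_sq_le {f : E → EReal} {L lam : ℝ} {x xhat : E} (hbot : ∀ x, f x ≠ ⊥)
    (hconv : ConvexOn ℝ {y | f y ≠ ⊤} fun y => (f y).toReal + L / 2 * ‖y‖ ^ 2)
    (hxhat : f xhat ≠ ⊤)
    (hmin : ∀ x', f xhat + ((1 / (2 * lam) * ‖x - xhat‖ ^ 2 : ℝ) : EReal) ≤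
        f x' + ((1 / (2 * lam) * ‖x - x'‖ ^ 2 : ℝ) : EReal)) (y : E) :
    f xhat + ((⟪(1 / lam) • (x - xhat), y - xhat⟫_ℝ - L / 2 * ‖y - xhat‖ ^ 2 : ℝ) : EReal) ≤
      f y := by
  rcases eq_or_ne (f y) ⊤ with hy | hy
  · exact hy ▸ le_top
  have hmin' :
      IsMinOn (fun y => (f y).toReal + 1 / (2 * lam) * ‖x - y‖ ^ 2) {y | f y ≠ ⊤} xhat := by
    intro y hy
    have h := hmin y
    rw [← EReal.coe_toReal hxhat (hbot xhat), ← EReal.coe_toReal hy (hbot y)] at h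
    exact_mod_cast h
  have h := add_inner_sub_sq_le_of_isMinOn hconv hmin' hxhat hy
  rw [← EReal.coe_toReal hxhat (hbot xhat), ← EReal.coe_toReal hy (hbot y)]
  exact_mod_cast (by linarith : _ ≤ (f y).toReal)

theorem eventually_add_inner_sub_mul_norm_le {f : E → EReal} {a u : E} {c ε : ℝ}
    (h : ∀ y, f a + ((⟪u, y - a⟫_ℝ - c * ‖y - a‖ ^ 2 : ℝ) : EReal) ≤ f y) (hε : 0 < ε) :
    ∀ᶠ y in 𝓝 a, f a + ((⟪u, y - a⟫_ℝ - ε * ‖y - a‖ : ℝ) : EReal) ≤ f y := by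
  have hlim : Tendsto (fun y => c * ‖y - a‖) (𝓝 a) (𝓝 0) := by
    simpa using ((by fun_prop : Continuous fun y => c * ‖y - a‖).tendsto a)
  filter_upwards [hlim.eventually (gt_mem_nhds hε)] with y hy
  refine le_trans (add_le_add_right (EReal.coe_le_coe_iff.2 ?_) _) (h y)
  nlinarith [norm_nonneg (y - a)]

noncomputable def moreauEnvelope (f : E → EReal) (lam : ℝ) (z : E) : EReal :=
  ⨅ y, f y + ((1 / (2 * lam) * ‖z - y‖ ^ 2 : ℝ) : EReal)

theorem moreauEnvelope_le_add_inner {f : E → EReal} {lam r : ℝ} {x xhat : E} (hr : f xhat = r)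
    (z : E) :
    moreauEnvelope f lam z ≤ ((r + 1 / (2 * lam) * ‖x - xhat‖ ^ 2 +
      ⟪(1 / lam) • (x - xhat), z - x⟫_ℝ + 1 / (2 * lam) * ‖z - x‖ ^ 2 : ℝ) : EReal) := by
  have hexp : ‖z - xhat‖ ^ 2 = ‖x - xhat‖ ^ 2 + 2 * ⟪x - xhat, z - x⟫_ℝ + ‖z - x‖ ^ 2 := by
    rw [← norm_add_sq_real]; congr 2; abel
  refine (iInf_le _ xhat).trans_eq ?_
  rw [hr, ← EReal.coe_add, hexp, real_inner_smul_left]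
  congr 1
  ring

theorem le_moreauEnvelope {f : E → EReal} {L lam r : ℝ} {x xhat : E} (hlam : 0 < lam)
    (hlamL : lam * L < 1) (hr : f xhat = r)
    (hprox : ∀ y, f xhat + ((⟪(1 / lam) • (x - xhat), y - xhat⟫_ℝ - L / 2 * ‖y - xhat‖ ^ 2 : ℝ) :
      EReal) ≤ f y) (z : E) :
    ((r + 1 / (2 * lam) * ‖x - xhat‖ ^ 2 + ⟪(1 / lam) • (x - xhat), z - x⟫_ℝ -
      L / (2 * (1 - lam * L)) * ‖z - x‖ ^ 2 : ℝ) : EReal) ≤ moreauEnvelope f lam z := by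
  refine le_iInf fun y => ?_
  have hquad : ∀ v h d : E, 1 / (2 * lam) * ‖v‖ ^ 2 + ⟪(1 / lam) • v, h⟫_ℝ -
      L / (2 * (1 - lam * L)) * ‖h‖ ^ 2 ≤
      ⟪(1 / lam) • v, d⟫_ℝ - L / 2 * ‖d‖ ^ 2 + 1 / (2 * lam) * ‖h + v - d‖ ^ 2 := by
    intro v h d
    have hμ : 0 < 1 - lam * L := by linarith
    have hgap : 0 ≤ ‖h - (1 - lam * L) • d‖ ^ 2 / (2 * lam * (1 - lam * L)) := by positivity
    rw [norm_sub_sq_real, norm_smul, inner_smul_right, Real.norm_of_nonneg hμ.le] at hgap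
    rw [← sub_nonneg, norm_sub_sq_real, norm_add_sq_real, inner_add_left,
      real_inner_smul_left, real_inner_smul_left, real_inner_comm h v]
    convert hgap using 1
    field_simp
    ring
  have hzy : z - y = (z - x) + (x - xhat) - (y - xhat) := by abel
  calc _ ≤ f xhat + ((⟪(1 / lam) • (x - xhat), y - xhat⟫_ℝ - L / 2 * ‖y - xhat‖ ^ 2 : ℝ) : EReal) +
        ((1 / (2 * lam) * ‖z - y‖ ^ 2 : ℝ) : EReal) := by
        rw [hr, ← EReal.coe_add, ← EReal.coe_add, EReal.coe_le_coe_iff, hzy]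
        linarith [hquad (x - xhat) (z - x) (y - xhat)]
    _ ≤ _ := by gcongr; exact hprox y

theorem stmt_3_general {p : ℕ} (f : EuclideanSpace ℝ (Fin p) → EReal) (L lam : ℝ)
    (hlam : 0 < lam) (hlamL : lam * L < 1)
    (hproper : ∃ x, f x ≠ ⊤) (hbot : ∀ x, f x ≠ ⊥)
    (hwc : ∀ x y : EuclideanSpace ℝ (Fin p), ∀ a b : ℝ, 0 ≤ a → 0 ≤ b → a + b = 1 →
      f (a • x + b • y) + ((L / 2 * ‖a • x + b • y‖ ^ 2 : ℝ) : EReal) ≤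
        (a : EReal) * (f x + ((L / 2 * ‖x‖ ^ 2 : ℝ) : EReal)) +
          (b : EReal) * (f y + ((L / 2 * ‖y‖ ^ 2 : ℝ) : EReal)))
    (x xhat : EuclideanSpace ℝ (Fin p))
    (hmin : ∀ x', f xhat + ((1 / (2 * lam) * ‖x - xhat‖ ^ 2 : ℝ) : EReal) ≤
        f x' + ((1 / (2 * lam) * ‖x - x'‖ ^ 2 : ℝ) : EReal)) :
    ∃ F : EuclideanSpace ℝ (Fin p) → ℝ,
      (∀ z, (F z : EReal) = ⨅ x', f x' + ((1 / (2 * lam) * ‖z - x'‖ ^ 2 : ℝ) : EReal)) ∧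
      HasGradientAt F ((1 / lam) • (x - xhat)) x ∧
      (∀ ε : ℝ, 0 < ε → ∀ᶠ x' in nhds xhat,
        f xhat + ((⟪(1 / lam) • (x - xhat), x' - xhat⟫_ℝ - ε * ‖x' - xhat‖ : ℝ) : EReal) ≤ f x') ∧
      ‖(1 / lam) • (x - xhat)‖ = (1 / lam) * ‖xhat - x‖ := by
  have hxhat : f xhat ≠ ⊤ :=
    ne_top_of_forall_add_coe_le (q := fun y => 1 / (2 * lam) * ‖x - y‖ ^ 2) hproper hmin
  have hprox := add_coe_inner_sub_sq_le hbot (convexOn_toReal_add_sq hbot hwc) hxhat hmin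
  obtain ⟨r, hr⟩ : ∃ r : ℝ, f xhat = r := ⟨_, (EReal.coe_toReal hxhat (hbot xhat)).symm⟩
  have hlo := le_moreauEnvelope hlam hlamL hr hprox
  have hhi := moreauEnvelope_le_add_inner (lam := lam) (x := x) hr
  have hF : ∀ z, ((moreauEnvelope f lam z).toReal : EReal) = moreauEnvelope f lam z := fun z =>
    EReal.coe_toReal (ne_top_of_le_ne_top (EReal.coe_ne_top _) (hhi z))
      (ne_bot_of_le_ne_bot (EReal.coe_ne_bot _) (hlo z))
  refine ⟨fun z => (moreauEnvelope f lam z).toReal, hF,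
    hasGradientAt_of_sandwich (fun z => EReal.coe_le_coe_iff.1 ((hlo z).trans_eq (hF z).symm))
      (fun z => EReal.coe_le_coe_iff.1 ((hF z).trans_le (hhi z))),
    fun ε hε => eventually_add_inner_sub_mul_norm_le hprox hε, ?_⟩
  rw [norm_smul, Real.norm_of_nonneg (by positivity), norm_sub_rev]

/-- Lemma 1(c): For a proper l.s.c. `L`-weakly convex
`f : ℝ^p → ℝ ∪ {+∞}`, `0 < λ`, `λL < 1`, and `x̂ = x̂_λ(x)` the minimizer of
`x' ↦ f x' + (1/(2λ))‖x − x'‖²`, the Moreau envelope `f_λ` is differentiable at `x`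
with `∇f_λ(x) = (x − x̂)/λ`, and `u = (x − x̂)/λ` is a Fréchet subgradient of `f` at `x̂`
(stated via the equivalent ε-form of the liminf inequality); in particular
`min_{u ∈ ∂f(x̂)} ‖u‖ ≤ (1/λ)‖x̂ − x‖ = ‖∇f_λ(x)‖`. -/
theorem stmt_3 {p : ℕ} (f : EuclideanSpace ℝ (Fin p) → EReal) (L lam : ℝ)
    (hlam : 0 < lam) (hlamL : lam * L < 1)
    (hproper : ∃ x, f x ≠ ⊤) (hbot : ∀ x, f x ≠ ⊥)
    (hlsc : LowerSemicontinuous f)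
    (hwc : ∀ x y : EuclideanSpace ℝ (Fin p), ∀ a b : ℝ, 0 ≤ a → 0 ≤ b → a + b = 1 →
      f (a • x + b • y) + ((L / 2 * ‖a • x + b • y‖ ^ 2 : ℝ) : EReal) ≤
        (a : EReal) * (f x + ((L / 2 * ‖x‖ ^ 2 : ℝ) : EReal)) +
          (b : EReal) * (f y + ((L / 2 * ‖y‖ ^ 2 : ℝ) : EReal)))
    (x xhat : EuclideanSpace ℝ (Fin p))
    (hmin : ∀ x', f xhat + ((1 / (2 * lam) * ‖x - xhat‖ ^ 2 : ℝ) : EReal) ≤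
        f x' + ((1 / (2 * lam) * ‖x - x'‖ ^ 2 : ℝ) : EReal)) :
    ∃ F : EuclideanSpace ℝ (Fin p) → ℝ,
      (∀ z, (F z : EReal) = ⨅ x', f x' + ((1 / (2 * lam) * ‖z - x'‖ ^ 2 : ℝ) : EReal)) ∧
      HasGradientAt F ((1 / lam) • (x - xhat)) x ∧
      (∀ ε : ℝ, 0 < ε → ∀ᶠ x' in nhds xhat,
        f xhat + ((⟪(1 / lam) • (x - xhat), x' - xhat⟫_ℝ - ε * ‖x' - xhat‖ : ℝ) : EReal) ≤ f x') ∧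
      ‖(1 / lam) • (x - xhat)‖ = (1 / lam) * ‖xhat - x‖ :=
  stmt_3_general f L lam hlam hlamL hproper hbot hwc x xhat hmin
end

section
/- Let 𝒳 ⊆ ℝ^p be a nonempty closed convex set and let g : 𝒳 × ℝ^q → ℝ be L-smooth with g(·, y) σ-strongly convex for every y (0 < σ ≤ L). For each y let x*(y) = argmin_{x ∈ 𝒳} g(x, y) be the unique minimizer. Then the map y ↦ x*(y) is (L/σ)-Lipschitz: ‖x*(y₁) − x*(y₂)‖ ≤ (L/σ)‖y₁ − y₂‖ for all y₁, y₂. -/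
/-!
Strong convexity makes `∇ₓ g(·, y₁)` strongly monotone, and the first-order optimality
conditions at `x₁` and `x₂` turn this into `σ ‖x₁ - x₂‖² ≤ ⟪∇ₓ g(x₂, y₂) - ∇ₓ g(x₂, y₁), x₁ - x₂⟫`.
Cauchy–Schwarz and the `L`-Lipschitz dependence of `∇ₓ g(x₂, ·)` on `y` then give
`σ ‖x₁ - x₂‖ ≤ L ‖y₁ - y₂‖`.
-/

open Set
open scoped RealInnerProductSpace Gradient

section FirstOrder

variable {E : Type*} [NormedAddCommGroup E] [NormedSpace ℝ E] {s : Set E} {f : E → ℝ} {x y : E}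

lemma ConvexOn.hasFDerivAt_apply_sub_le {f' : E →L[ℝ] ℝ} (hf : ConvexOn ℝ s f) (hx : x ∈ s)
    (hy : y ∈ s) (hf' : HasFDerivAt f f' x) : f' (y - x) ≤ f y - f x := by
  have hline : ConvexOn ℝ (Icc (0 : ℝ) 1) (f ∘ AffineMap.lineMap x y) :=
    (hf.comp_affineMap _).subset (fun _ ht => hf.1.lineMap_mem hx hy ht) (convex_Icc 0 1)
  have hderiv : HasDerivAt (f ∘ AffineMap.lineMap x y) (f' (y - x)) (0 : ℝ) :=
    hf'.comp_hasDerivAt_of_eq 0 AffineMap.hasDerivAt_lineMap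
      (AffineMap.lineMap_apply_zero x y).symm
  simpa [slope_def_field] using
    hline.le_slope_of_hasDerivAt (left_mem_Icc.2 zero_le_one) (right_mem_Icc.2 zero_le_one)
      one_pos hderiv

lemma ConvexOn.hasFDerivAt_monotone {f'x f'y : E →L[ℝ] ℝ} (hf : ConvexOn ℝ s f) (hx : x ∈ s)
    (hy : y ∈ s) (hf'x : HasFDerivAt f f'x x) (hf'y : HasFDerivAt f f'y y) :
    0 ≤ (f'y - f'x) (y - x) := by
  have hxy := hf.hasFDerivAt_apply_sub_le hx hy hf'x
  have hyx := hf.hasFDerivAt_apply_sub_le hy hx hf'y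
  rw [← neg_sub, map_neg] at hyx
  rw [sub_apply]
  linarith

lemma IsMinOn.hasFDerivAt_apply_sub_nonneg {f' : E →L[ℝ] ℝ} (hmin : IsMinOn f s x)
    (hs : Convex ℝ s) (hx : x ∈ s) (hy : y ∈ s) (hf' : HasFDerivAt f f' x) :
    0 ≤ f' (y - x) :=
  hmin.localize.hasFDerivWithinAt_nonneg hf'.hasFDerivWithinAt
    (sub_mem_posTangentConeAt_of_segment_subset (hs.segment_subset hx hy))

end FirstOrder

section Gradient

variable {F : Type*} [NormedAddCommGroup F] [InnerProductSpace ℝ F] [CompleteSpace F]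
  {s : Set F} {f : F → ℝ} {σ : ℝ} {x y : F}

lemma StrongConvexOn.inner_gradient_sub_ge (hf : StrongConvexOn s σ f) (hx : x ∈ s)
    (hy : y ∈ s) (hfx : DifferentiableAt ℝ f x) (hfy : DifferentiableAt ℝ f y) :
    σ * ‖y - x‖ ^ 2 ≤ ⟪∇ f y - ∇ f x, y - x⟫ := by
  have hderiv : ∀ z, DifferentiableAt ℝ f z → HasFDerivAt (fun z => f z - σ / 2 * ‖z‖ ^ 2)
      (fderiv ℝ f z - (σ / 2) • (2 • innerSL ℝ z)) z := fun z hz =>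
    hz.hasFDerivAt.sub ((hasStrictFDerivAt_norm_sq z).hasFDerivAt.const_mul (σ / 2))
  have hmono := (strongConvexOn_iff_convex.1 hf).hasFDerivAt_monotone hx hy (hderiv x hfx)
    (hderiv y hfy)
  have hquad : ⟪y, y - x⟫ - ⟪x, y - x⟫ = ‖y - x‖ ^ 2 := by
    rw [← inner_sub_left, real_inner_self_eq_norm_sq]
  simp only [sub_apply, smul_apply, innerSL_apply_apply, smul_eq_mul, nsmul_eq_mul,
    Nat.cast_ofNat, ← inner_gradient_left] at hmono
  rw [inner_sub_left, ← hquad]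
  linarith

lemma IsMinOn.inner_gradient_sub_nonneg (hmin : IsMinOn f s x) (hs : Convex ℝ s) (hx : x ∈ s)
    (hy : y ∈ s) (hf : DifferentiableAt ℝ f x) : 0 ≤ ⟪∇ f x, y - x⟫ := by
  rw [inner_gradient_left]
  exact hmin.hasFDerivAt_apply_sub_nonneg hs hx hy hf.hasFDerivAt

lemma StrongConvexOn.mul_norm_sub_le_of_isMinOn {f₁ f₂ : F → ℝ} {x₁ x₂ : F}
    (hf₁ : StrongConvexOn s σ f₁) (hx₁ : x₁ ∈ s) (hx₂ : x₂ ∈ s)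
    (hmin₁ : IsMinOn f₁ s x₁) (hmin₂ : IsMinOn f₂ s x₂) (hd₁ : DifferentiableAt ℝ f₁ x₁)
    (hd₁' : DifferentiableAt ℝ f₁ x₂) (hd₂ : DifferentiableAt ℝ f₂ x₂) :
    σ * ‖x₁ - x₂‖ ≤ ‖∇ f₁ x₂ - ∇ f₂ x₂‖ := by
  have hmono := hf₁.inner_gradient_sub_ge hx₂ hx₁ hd₁' hd₁
  have hopt₁ := hmin₁.inner_gradient_sub_nonneg hf₁.1 hx₁ hx₂ hd₁
  have hopt₂ := hmin₂.inner_gradient_sub_nonneg hf₁.1 hx₂ hx₁ hd₂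
  have hsq : σ * ‖x₁ - x₂‖ ^ 2 ≤ ‖∇ f₁ x₂ - ∇ f₂ x₂‖ * ‖x₁ - x₂‖ := by
    calc σ * ‖x₁ - x₂‖ ^ 2 ≤ ⟪∇ f₂ x₂ - ∇ f₁ x₂, x₁ - x₂⟫ := by
          rw [← neg_sub x₁ x₂, inner_neg_right] at hopt₁
          rw [inner_sub_left] at hmono ⊢
          linarith
      _ ≤ ‖∇ f₂ x₂ - ∇ f₁ x₂‖ * ‖x₁ - x₂‖ := real_inner_le_norm _ _
      _ = ‖∇ f₁ x₂ - ∇ f₂ x₂‖ * ‖x₁ - x₂‖ := by rw [norm_sub_rev]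
  rcases (norm_nonneg (x₁ - x₂)).eq_or_lt with h0 | hpos
  · rw [← h0, mul_zero]
    exact norm_nonneg _
  · nlinarith

end Gradient

theorem stmt_8_general {p q : ℕ} (X : Set (EuclideanSpace ℝ (Fin p)))
    (g : EuclideanSpace ℝ (Fin p) × EuclideanSpace ℝ (Fin q) → ℝ) (L σ : ℝ)
    (hσ : 0 < σ)
    (hdx : ∀ y, Differentiable ℝ fun x => g (x, y))
    (hsmooth : ∀ x y x' y',
      ‖gradient (fun z => g (z, y)) x - gradient (fun z => g (z, y')) x'‖ ≤
          L * (‖x - x'‖ + ‖y - y'‖) ∧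
      ‖gradient (fun z => g (x, z)) y - gradient (fun z => g (x', z)) y'‖ ≤
          L * (‖x - x'‖ + ‖y - y'‖))
    (hsc : ∀ y, ConvexOn ℝ X fun x => g (x, y) - σ / 2 * ‖x‖ ^ 2)
    (y₁ y₂ : EuclideanSpace ℝ (Fin q)) (x₁ x₂ : EuclideanSpace ℝ (Fin p))
    (hx₁ : x₁ ∈ X) (hx₂ : x₂ ∈ X)
    (hmin₁ : ∀ x ∈ X, g (x₁, y₁) ≤ g (x, y₁))
    (hmin₂ : ∀ x ∈ X, g (x₂, y₂) ≤ g (x, y₂)) :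
    ‖x₁ - x₂‖ ≤ L / σ * ‖y₁ - y₂‖ := by
  have hperturb : σ * ‖x₁ - x₂‖ ≤
      ‖gradient (fun z => g (z, y₁)) x₂ - gradient (fun z => g (z, y₂)) x₂‖ :=
    (strongConvexOn_iff_convex.2 (hsc y₁)).mul_norm_sub_le_of_isMinOn hx₁ hx₂
      (isMinOn_iff.2 hmin₁) (isMinOn_iff.2 hmin₂) (hdx y₁ x₁) (hdx y₁ x₂) (hdx y₂ x₂)
  have hlip := (hsmooth x₂ y₁ x₂ y₂).1
  rw [sub_self, norm_zero, zero_add] at hlip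
  rw [div_mul_eq_mul_div, le_div_iff₀ hσ, mul_comm]
  exact hperturb.trans hlip

/-- Lipschitzness of the argmin map, Eq. (18) in the paper: if
`g : 𝒳 × ℝ^q → ℝ` is `L`-smooth and `g(·,y)` is `σ`-strongly convex (`0 < σ ≤ L`) on the
nonempty closed convex set `𝒳`, then the minimizers `x*(y)` satisfy
`‖x*(y₁) − x*(y₂)‖ ≤ (L/σ)‖y₁ − y₂‖`. -/
theorem stmt_8 {p q : ℕ} (X : Set (EuclideanSpace ℝ (Fin p))) (hXne : X.Nonempty)
    (hXcl : IsClosed X) (hXconv : Convex ℝ X)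
    (g : EuclideanSpace ℝ (Fin p) × EuclideanSpace ℝ (Fin q) → ℝ) (L σ : ℝ)
    (hσ : 0 < σ) (hσL : σ ≤ L)
    (hdx : ∀ y, Differentiable ℝ fun x => g (x, y))
    (hdy : ∀ x, Differentiable ℝ fun y => g (x, y))
    (hsmooth : ∀ x y x' y',
      ‖gradient (fun z => g (z, y)) x - gradient (fun z => g (z, y')) x'‖ ≤
          L * (‖x - x'‖ + ‖y - y'‖) ∧
      ‖gradient (fun z => g (x, z)) y - gradient (fun z => g (x', z)) y'‖ ≤
          L * (‖x - x'‖ + ‖y - y'‖))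
    (hsc : ∀ y, ConvexOn ℝ X fun x => g (x, y) - σ / 2 * ‖x‖ ^ 2)
    (y₁ y₂ : EuclideanSpace ℝ (Fin q)) (x₁ x₂ : EuclideanSpace ℝ (Fin p))
    (hx₁ : x₁ ∈ X) (hx₂ : x₂ ∈ X)
    (hmin₁ : ∀ x ∈ X, g (x₁, y₁) ≤ g (x, y₁))
    (hmin₂ : ∀ x ∈ X, g (x₂, y₂) ≤ g (x, y₂)) :
    ‖x₁ - x₂‖ ≤ L / σ * ‖y₁ - y₂‖ :=
  stmt_8_general X g L σ hσ hdx hsmooth hsc y₁ y₂ x₁ x₂ hx₁ hx₂ hmin₁ hmin₂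
end

section
/- Let 𝒴 ⊆ ℝ^q be a nonempty compact convex set, let g : ℝ^p × 𝒴 → ℝ be L-smooth with g(·, y) σ-strongly convex for every y (0 < σ ≤ L), and set β = 2L²/σ. Fix w ∈ 𝒴 and define the operator T(y) = P_𝒴(w + (1/β) ∇_y g(x*(y), w)), where x*(y) = argmin_{x ∈ ℝ^p} g(x, y) and P_𝒴 is Euclidean projection onto 𝒴. Then T is a (1/2)-contraction, i.e. ‖T(y₁) − T(y₂)‖ ≤ (1/2)‖y₁ − y₂‖ for all y₁, y₂ ∈ 𝒴, and consequently T has a unique fixed point in 𝒴. -/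
/-!
Strong convexity makes the solution map `x*` Lipschitz with constant `L / σ`: at two parameters
the critical points differ by at most `σ⁻¹` times the gap between the two gradients, which is
at most `L ‖y₁ - y₂‖`. The map `y ↦ ∇_y g(x*(y), w)` is then `L² / σ`-Lipschitz, scaling by
`β⁻¹ = σ / (2L²)` halves this, and the projection onto a convex set is nonexpansive. Banach's fixed
point theorem on the compact (hence complete) set `𝒴` gives the unique fixed point.
-/

open RealInnerProductSpace Set

theorem mul_le_of_mul_sq_le_mul {a b c : ℝ} (ha : 0 ≤ a) (hb : 0 ≤ b) (h : c * a ^ 2 ≤ b * a) :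
    c * a ≤ b := by
  rcases ha.eq_or_lt with rfl | ha
  · simpa using hb
  · exact le_of_mul_le_mul_right (by linarith) ha

section Gradient

variable {F : Type*} [NormedAddCommGroup F] [InnerProductSpace ℝ F] [CompleteSpace F]

theorem IsLocalMin.gradient_eq_zero {f : F → ℝ} {a : F} (h : IsLocalMin f a) :
    gradient f a = 0 := by
  rw [gradient, h.fderiv_eq_zero, map_zero]

theorem hasGradientAt_half_mul_norm_sq (σ : ℝ) (x : F) :
    HasGradientAt (fun x => σ / 2 * ‖x‖ ^ 2) (σ • x) x := by
  rw [hasGradientAt_iff_hasFDerivAt]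
  refine ((hasStrictFDerivAt_norm_sq x).hasFDerivAt.const_mul (σ / 2)).congr_fderiv ?_
  ext v
  simp
  ring

theorem ConvexOn.inner_sub_nonneg_of_hasGradientAt {f : F → ℝ} {f' : F → F}
    (hf : ConvexOn ℝ univ f) (hf' : ∀ x, HasGradientAt f (f' x) x) (a b : F) :
    0 ≤ ⟪f' b - f' a, b - a⟫ := by
  have hderiv : ∀ t : ℝ, HasDerivAt (f ∘ AffineMap.lineMap a b)
      ⟪f' (AffineMap.lineMap a b t), b - a⟫ t := fun t => by
    simpa using (hf' _).hasFDerivAt.comp_hasDerivAt t AffineMap.hasDerivAt_lineMap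
  have hmono := (hf.comp_affineMap (AffineMap.lineMap a b)).monotoneOn_deriv
    (fun t _ => (hderiv t).differentiableAt) (mem_univ 0) (mem_univ 1) zero_le_one
  rw [(hderiv 0).deriv, (hderiv 1).deriv, AffineMap.lineMap_apply_zero,
    AffineMap.lineMap_apply_one] at hmono
  rw [inner_sub_left]
  linarith

theorem StrongConvexOn.mul_norm_sq_le_inner_gradient_sub {f : F → ℝ} {σ : ℝ}
    (hf : StrongConvexOn univ σ f) (hd : Differentiable ℝ f) (a b : F) :
    σ * ‖b - a‖ ^ 2 ≤ ⟪gradient f b - gradient f a, b - a⟫ := by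
  have hg : ∀ x, HasGradientAt (fun x => f x - σ / 2 * ‖x‖ ^ 2) (gradient f x - σ • x) x :=
    fun x => by
      rw [hasGradientAt_iff_hasFDerivAt, map_sub]
      exact (hd x).hasGradientAt.hasFDerivAt.sub (hasGradientAt_half_mul_norm_sq σ x).hasFDerivAt
  have h := (strongConvexOn_iff_convex.mp hf).inner_sub_nonneg_of_hasGradientAt hg a b
  have hsplit : gradient f b - σ • b - (gradient f a - σ • a)
      = (gradient f b - gradient f a) - σ • (b - a) := by module
  rw [hsplit, inner_sub_left, real_inner_smul_left, real_inner_self_eq_norm_sq] at h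
  linarith

theorem StrongConvexOn.mul_norm_sub_le_of_gradient_eq_zero {φ ψ : F → ℝ} {σ : ℝ}
    (hφ : StrongConvexOn univ σ φ) (hd : Differentiable ℝ φ) {a b : F}
    (ha : gradient φ a = 0) (hb : gradient ψ b = 0) :
    σ * ‖a - b‖ ≤ ‖gradient φ b - gradient ψ b‖ := by
  have hsq : σ * ‖a - b‖ ^ 2 ≤ ‖gradient φ b - gradient ψ b‖ * ‖a - b‖ :=
    calc σ * ‖a - b‖ ^ 2 ≤ ⟪gradient φ a - gradient φ b, a - b⟫ :=
          hφ.mul_norm_sq_le_inner_gradient_sub hd b a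
      _ = ⟪gradient ψ b - gradient φ b, a - b⟫ := by rw [ha, hb]
      _ ≤ ‖gradient φ b - gradient ψ b‖ * ‖a - b‖ := by
          rw [norm_sub_rev]; exact real_inner_le_norm _ _
  exact mul_le_of_mul_sq_le_mul (norm_nonneg _) (norm_nonneg _) hsq

end Gradient

section Projection

variable {F : Type*} [NormedAddCommGroup F] [InnerProductSpace ℝ F]

theorem Convex.inner_sub_nonpos_of_isMinOn_norm_sub {Y : Set F} (hY : Convex ℝ Y) {u z : F}
    (hz : z ∈ Y) (hmin : IsMinOn (fun v => ‖u - v‖) Y z) : ∀ v ∈ Y, ⟪u - z, v - z⟫ ≤ 0 := by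
  have : Nonempty Y := ⟨⟨z, hz⟩⟩
  have hbdd : BddBelow (range fun v : Y => ‖u - v‖) :=
    ⟨0, forall_mem_range.mpr fun _ => norm_nonneg _⟩
  exact (norm_eq_iInf_iff_real_inner_le_zero hY hz).mp
    (le_antisymm (le_ciInf fun v => isMinOn_iff.mp hmin v v.2) (ciInf_le hbdd ⟨z, hz⟩))

theorem Convex.norm_sub_le_of_isMinOn_norm_sub {Y : Set F} (hY : Convex ℝ Y) {u₁ u₂ z₁ z₂ : F}
    (hz₁ : z₁ ∈ Y) (hz₂ : z₂ ∈ Y) (hmin₁ : IsMinOn (fun v => ‖u₁ - v‖) Y z₁)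
    (hmin₂ : IsMinOn (fun v => ‖u₂ - v‖) Y z₂) : ‖z₁ - z₂‖ ≤ ‖u₁ - u₂‖ := by
  have h₁ := hY.inner_sub_nonpos_of_isMinOn_norm_sub hz₁ hmin₁ z₂ hz₂
  have h₂ := hY.inner_sub_nonpos_of_isMinOn_norm_sub hz₂ hmin₂ z₁ hz₁
  have hsq : ‖z₁ - z₂‖ ^ 2 ≤ ‖u₁ - u₂‖ * ‖z₁ - z₂‖ :=
    calc ‖z₁ - z₂‖ ^ 2
        ≤ ⟪z₁ - z₂, z₁ - z₂⟫ - ⟪u₁ - z₁, z₂ - z₁⟫ - ⟪u₂ - z₂, z₁ - z₂⟫ := by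
          rw [real_inner_self_eq_norm_sq]; linarith
      _ = ⟪u₁ - u₂, z₁ - z₂⟫ := by
          simp only [inner_sub_left, inner_sub_right, real_inner_comm]; ring
      _ ≤ ‖u₁ - u₂‖ * ‖z₁ - z₂‖ := real_inner_le_norm _ _
  nlinarith [norm_nonneg (z₁ - z₂), norm_nonneg (u₁ - u₂)]

end Projection

theorem IsComplete.existsUnique_fixedPoint {α : Type*} [MetricSpace α] {s : Set α} {T : α → α}
    {K : NNReal} (hs : IsComplete s) (hne : s.Nonempty) (hsT : MapsTo T s s) (hK : K < 1)
    (hT : LipschitzOnWith K T s) : ∃! y, y ∈ s ∧ T y = y := by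
  have hC : ContractingWith K (hsT.restrict T s s) := ⟨hK, hT.mapsToRestrict hsT⟩
  obtain ⟨x, hx⟩ := hne
  obtain ⟨y, hy, hfix, -⟩ := hC.exists_fixedPoint' hs hsT hx (edist_ne_top _ _)
  refine ⟨y, ⟨hy, hfix⟩, fun y' ⟨hy', hfix'⟩ => ?_⟩
  have := hs.completeSpace_coe
  exact congrArg Subtype.val (hC.fixedPoint_unique' (x := ⟨y', hy'⟩) (y := ⟨y, hy⟩)
    (Subtype.ext hfix') (Subtype.ext hfix))

theorem stmt_9_general {p q : ℕ} (Y : Set (EuclideanSpace ℝ (Fin q))) (hYne : Y.Nonempty)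
    (hYcomp : IsCompact Y) (hYconv : Convex ℝ Y)
    (g : EuclideanSpace ℝ (Fin p) × EuclideanSpace ℝ (Fin q) → ℝ) (L σ : ℝ)
    (hσ : 0 < σ) (hσL : σ ≤ L)
    (hdx : ∀ y, Differentiable ℝ fun x => g (x, y))
    (hsmooth : ∀ x y x' y',
      ‖gradient (fun z => g (z, y)) x - gradient (fun z => g (z, y')) x'‖ ≤
          L * (‖x - x'‖ + ‖y - y'‖) ∧
      ‖gradient (fun z => g (x, z)) y - gradient (fun z => g (x', z)) y'‖ ≤
          L * (‖x - x'‖ + ‖y - y'‖))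
    (hsc : ∀ y, ConvexOn ℝ Set.univ fun x => g (x, y) - σ / 2 * ‖x‖ ^ 2)
    (β : ℝ) (hβ : β = 2 * L ^ 2 / σ)
    (w : EuclideanSpace ℝ (Fin q))
    (xstar : EuclideanSpace ℝ (Fin q) → EuclideanSpace ℝ (Fin p))
    (hxstar : ∀ y x, g (xstar y, y) ≤ g (x, y))
    (T : EuclideanSpace ℝ (Fin q) → EuclideanSpace ℝ (Fin q))
    (hTmem : ∀ y, T y ∈ Y)
    (hTproj : ∀ y, ∀ v ∈ Y,
      ‖w + β⁻¹ • gradient (fun y' => g (xstar y, y')) w - T y‖ ≤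
        ‖w + β⁻¹ • gradient (fun y' => g (xstar y, y')) w - v‖) :
    (∀ y₁ ∈ Y, ∀ y₂ ∈ Y, ‖T y₁ - T y₂‖ ≤ 1 / 2 * ‖y₁ - y₂‖) ∧
    (∃! yf, yf ∈ Y ∧ T yf = yf) := by
  have hL : 0 < L := hσ.trans_le hσL
  have hβpos : 0 < β := hβ ▸ by positivity
  have hxstar_lip : ∀ y₁ y₂, σ * ‖xstar y₁ - xstar y₂‖ ≤ L * ‖y₁ - y₂‖ := fun y₁ y₂ =>
    calc σ * ‖xstar y₁ - xstar y₂‖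
        ≤ ‖gradient (fun x => g (x, y₁)) (xstar y₂) - gradient (fun x => g (x, y₂)) (xstar y₂)‖ :=
          (strongConvexOn_iff_convex.mpr (hsc y₁)).mul_norm_sub_le_of_gradient_eq_zero (hdx y₁)
            (IsLocalMin.gradient_eq_zero (.of_forall (hxstar y₁)))
            (IsLocalMin.gradient_eq_zero (.of_forall (hxstar y₂)))
      _ ≤ L * ‖y₁ - y₂‖ := by simpa using (hsmooth (xstar y₂) y₁ (xstar y₂) y₂).1
  have hcontr : ∀ y₁ ∈ Y, ∀ y₂ ∈ Y, ‖T y₁ - T y₂‖ ≤ 1 / 2 * ‖y₁ - y₂‖ := fun y₁ _ y₂ _ =>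
    calc ‖T y₁ - T y₂‖
        ≤ ‖(w + β⁻¹ • gradient (fun y' => g (xstar y₁, y')) w)
            - (w + β⁻¹ • gradient (fun y' => g (xstar y₂, y')) w)‖ :=
          hYconv.norm_sub_le_of_isMinOn_norm_sub (hTmem y₁) (hTmem y₂)
            (isMinOn_iff.mpr (hTproj y₁)) (isMinOn_iff.mpr (hTproj y₂))
      _ = ‖β⁻¹ • (gradient (fun y' => g (xstar y₁, y')) w
            - gradient (fun y' => g (xstar y₂, y')) w)‖ := by
          rw [add_sub_add_left_eq_sub, smul_sub]
      _ ≤ β⁻¹ * (L * ‖xstar y₁ - xstar y₂‖) := by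
          rw [norm_smul, Real.norm_of_nonneg (inv_nonneg.mpr hβpos.le)]
          gcongr
          simpa using (hsmooth (xstar y₁) w (xstar y₂) w).2
      _ ≤ β⁻¹ * (L * (L / σ * ‖y₁ - y₂‖)) := by
          gcongr
          rw [div_mul_eq_mul_div, le_div_iff₀ hσ]; linarith [hxstar_lip y₁ y₂]
      _ = 1 / 2 * ‖y₁ - y₂‖ := by rw [hβ]; field_simp
  refine ⟨hcontr, hYcomp.isComplete.existsUnique_fixedPoint hYne (fun y _ => hTmem y)
    (by norm_num : (1 / 2 : NNReal) < 1) (LipschitzOnWith.of_dist_le_mul fun y₁ h₁ y₂ h₂ => ?_)⟩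
  simpa [dist_eq_norm] using hcontr y₁ h₁ y₂ h₂

/-- contraction property of the Imp-STEP operator, Eq. (19):
with `β = 2L²/σ`, the map `T(y) = P_𝒴(w + β⁻¹ ∇_y g(x*(y), w))`, where
`x*(y) = argmin_x g(x,y)`, is a `1/2`-contraction on `𝒴` and hence has a unique
fixed point in `𝒴`. -/
theorem stmt_9 {p q : ℕ} (Y : Set (EuclideanSpace ℝ (Fin q))) (hYne : Y.Nonempty)
    (hYcomp : IsCompact Y) (hYconv : Convex ℝ Y)
    (g : EuclideanSpace ℝ (Fin p) × EuclideanSpace ℝ (Fin q) → ℝ) (L σ : ℝ)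
    (hσ : 0 < σ) (hσL : σ ≤ L)
    (hdx : ∀ y, Differentiable ℝ fun x => g (x, y))
    (hdy : ∀ x, Differentiable ℝ fun y => g (x, y))
    (hsmooth : ∀ x y x' y',
      ‖gradient (fun z => g (z, y)) x - gradient (fun z => g (z, y')) x'‖ ≤
          L * (‖x - x'‖ + ‖y - y'‖) ∧
      ‖gradient (fun z => g (x, z)) y - gradient (fun z => g (x', z)) y'‖ ≤
          L * (‖x - x'‖ + ‖y - y'‖))
    (hsc : ∀ y, ConvexOn ℝ Set.univ fun x => g (x, y) - σ / 2 * ‖x‖ ^ 2)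
    (β : ℝ) (hβ : β = 2 * L ^ 2 / σ)
    (w : EuclideanSpace ℝ (Fin q)) (hw : w ∈ Y)
    (xstar : EuclideanSpace ℝ (Fin q) → EuclideanSpace ℝ (Fin p))
    (hxstar : ∀ y x, g (xstar y, y) ≤ g (x, y))
    (T : EuclideanSpace ℝ (Fin q) → EuclideanSpace ℝ (Fin q))
    (hTmem : ∀ y, T y ∈ Y)
    (hTproj : ∀ y, ∀ v ∈ Y,
      ‖w + β⁻¹ • gradient (fun y' => g (xstar y, y')) w - T y‖ ≤
        ‖w + β⁻¹ • gradient (fun y' => g (xstar y, y')) w - v‖) :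
    (∀ y₁ ∈ Y, ∀ y₂ ∈ Y, ‖T y₁ - T y₂‖ ≤ 1 / 2 * ‖y₁ - y₂‖) ∧
    (∃! yf, yf ∈ Y ∧ T yf = yf) :=
  stmt_9_general Y hYne hYcomp hYconv g L σ hσ hσL hdx hsmooth hsc β hβ w xstar hxstar T hTmem
    hTproj
end

section
/- Let 𝒴 ⊆ ℝ^q be a nonempty compact convex set with diameter D_𝒴 = max_{y,y' ∈ 𝒴} ‖y − y'‖, and let g : ℝ^p × 𝒴 → ℝ be L-smooth, with g(·, y) σ-strongly convex for every y (0 < σ ≤ L) and g(x, ·) concave for every x. Set β = 2L²/σ, z₀ = y₀ ∈ 𝒴, and let nonnegative tolerances ε_step^{(k)} be given. Suppose the sequences satisfy, for each k ≥ 0: τ_k = 2/(k+2), η_k = (k+1)/(2β), w_k = (1 − τ_k) y_k + τ_k z_k, the pair (x_{k+1}, y_{k+1}) satisfies g(x_{k+1}, y_{k+1}) ≤ min_{x ∈ ℝ^p} g(x, y_{k+1}) + ε_step^{(k+1)} together with y_{k+1} = P_𝒴(w_k + (1/β) ∇_y g(x_{k+1}, w_k)), and z_{k+1} = P_𝒴(z_k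 + η_k ∇_y g(x_{k+1}, w_k)). Define x̄_K = (2/(K(K+1))) Σ_{i=1}^{K} i · x_i. Then for every K ≥ 1, max_{ỹ ∈ 𝒴} g(x̄_K, ỹ) − min_{x̃ ∈ ℝ^p} g(x̃, y_K) ≤ (4 (L²/σ) D_𝒴² + Σ_{k=1}^{K} k(k+1) ε_step^{(k)}) / (K(K+1)). -/
/-!
Let `h y = ⨅ x, g (x, y)` be the dual function and linearize `g (x (k+1), ·)` at `w k`.
Concavity bounds `g (x (k+1), ỹ)` and `h (y k)` above by this linearization; `L`-smoothness
(`β ≥ 2L`) and the minimizing property of `y (k+1)` bound `h (y (k+1)) + ε (k+1)` below by the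
linearization minus `β/2 ‖· - w k‖²` at `(1 - τ) y k + τ z (k+1)`, `τ = 2/(k+2)`; and the projection
defining `z (k+1)` gives the three-point inequality. Together, the potential
`Φ k = k (k+1) h (y k) - 2β ‖ỹ - z k‖²` satisfies
`2 (k+1) g (x (k+1), ỹ) ≤ Φ (k+1) - Φ k + (k+1) (k+2) ε (k+1)`.
Summing, and applying Jensen to the convex `g (·, ỹ)` with weights proportional to `k`, bounds
`K (K+1) g (x̄, ỹ)` by `K (K+1) h (y K) + 2β ‖ỹ - y 0‖² + ∑ k (k+1) ε k`; finally
`h (y K) ≤ g (x̃, y K)`.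
-/

open Set Finset InnerProductSpace

section

variable {E : Type*} [NormedAddCommGroup E] [InnerProductSpace ℝ E]

section Gradient

variable [CompleteSpace E] {f : E → ℝ} {s : Set E} {w u : E}

lemma hasDerivAt_comp_lineMap_zero (hf : DifferentiableAt ℝ f w) :
    HasDerivAt (f ∘ AffineMap.lineMap (k := ℝ) w u) ⟪gradient f w, u - w⟫_ℝ 0 := by
  have hf' : HasFDerivAt f (toDual ℝ E (gradient f w)) (AffineMap.lineMap w u (0 : ℝ)) := by
    simpa using hf.hasGradientAt.hasFDerivAt
  simpa using hf'.comp_hasDerivAt (0 : ℝ) AffineMap.hasDerivAt_lineMap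

lemma ConvexOn.add_inner_gradient_le (hconv : ConvexOn ℝ s f) (hf : DifferentiableAt ℝ f w)
    (hw : w ∈ s) (hu : u ∈ s) : f w + ⟪gradient f w, u - w⟫_ℝ ≤ f u := by
  have := (hconv.comp_affineMap (AffineMap.lineMap w u)).le_slope_of_hasDerivAt
    (by simpa using hw) (by simpa using hu) zero_lt_one (hasDerivAt_comp_lineMap_zero hf)
  simp only [slope_def_field, Function.comp_apply, AffineMap.lineMap_apply_zero,
    AffineMap.lineMap_apply_one, sub_zero, div_one] at this
  linarith

lemma ConcaveOn.le_add_inner_gradient (hconc : ConcaveOn ℝ s f) (hf : DifferentiableAt ℝ f w)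
    (hw : w ∈ s) (hu : u ∈ s) : f u ≤ f w + ⟪gradient f w, u - w⟫_ℝ := by
  have := (hconc.comp_affineMap (AffineMap.lineMap w u)).slope_le_of_hasDerivAt
    (by simpa using hw) (by simpa using hu) zero_lt_one (hasDerivAt_comp_lineMap_zero hf)
  simp only [slope_def_field, Function.comp_apply, AffineMap.lineMap_apply_zero,
    AffineMap.lineMap_apply_one, sub_zero, div_one] at this
  linarith

-- The mean value inequality gives the constant `L` instead of the sharp `L / 2`; this is enough
-- because `β = 2L²/σ ≥ 2L`.
lemma add_inner_gradient_sub_le_of_lipschitz_gradient (hf : Differentiable ℝ f) {L : ℝ}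
    (hL0 : 0 ≤ L) (hL : ∀ a b, ‖gradient f a - gradient f b‖ ≤ L * ‖a - b‖) (w u : E) :
    f w + ⟪gradient f w, u - w⟫_ℝ - L * ‖u - w‖ ^ 2 ≤ f u := by
  set h : E → ℝ := fun v => f v - ⟪gradient f w, v⟫_ℝ
  have hderiv : ∀ v, HasFDerivAt h (toDual ℝ E (gradient f v - gradient f w)) v := fun v =>
    ((hf v).hasGradientAt.hasFDerivAt.sub (innerSL ℝ (gradient f w)).hasFDerivAt).congr_fderiv
      (by ext; simp)
  have hbound : ∀ v ∈ segment ℝ w u,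
      ‖toDual ℝ E (gradient f v - gradient f w)‖ ≤ L * ‖u - w‖ := fun v hv => by
    rw [LinearIsometryEquiv.norm_map]
    exact (hL v w).trans (mul_le_mul_of_nonneg_left (norm_sub_le_of_mem_segment hv) hL0)
  have hmvt := (convex_segment w u).norm_image_sub_le_of_norm_hasFDerivWithin_le
    (fun v _ => (hderiv v).hasFDerivWithinAt) hbound (left_mem_segment ℝ w u)
    (right_mem_segment ℝ w u)
  have := (abs_le.mp hmvt).1
  simp only [h] at this
  rw [inner_sub_right, pow_two]
  linarith

lemma bddBelow_range_of_convexOn_sub_sq (hf : Differentiable ℝ f) {σ : ℝ} (hσ : 0 < σ)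
    (hsc : ConvexOn ℝ univ fun v => f v - σ / 2 * ‖v‖ ^ 2) : BddBelow (range f) := by
  have hφ : DifferentiableAt ℝ (fun v => f v - σ / 2 * ‖v‖ ^ 2) 0 :=
    (hf 0).sub ((differentiable_id.norm_sq ℝ 0).const_mul _)
  have htangent := fun v => hsc.add_inner_gradient_le hφ (mem_univ 0) (mem_univ v)
  simp only [norm_zero, sub_zero] at htangent
  set G := gradient (fun v => f v - σ / 2 * ‖v‖ ^ 2) 0
  refine ⟨f 0 - ‖G‖ ^ 2 / (2 * σ), ?_⟩
  rintro _ ⟨v, rfl⟩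
  have hcs := neg_le_of_abs_le (abs_real_inner_le_norm G v)
  rw [sub_le_iff_le_add, ← sub_le_iff_le_add', le_div_iff₀ (by positivity)]
  nlinarith [htangent v, sq_nonneg (σ * ‖v‖ - ‖G‖)]

end Gradient

variable {Y : Set E}

lemma real_inner_sub_sub_nonpos_of_forall_norm_sub_le (hY : Convex ℝ Y) {c p : E} (hp : p ∈ Y)
    (hmin : ∀ v ∈ Y, ‖c - p‖ ≤ ‖c - v‖) {v : E} (hv : v ∈ Y) : ⟪c - p, v - p⟫_ℝ ≤ 0 := by
  have : Nonempty Y := ⟨⟨p, hp⟩⟩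
  have : ‖c - p‖ = ⨅ v : Y, ‖c - v‖ := le_antisymm (le_ciInf fun v => hmin v v.2)
    (ciInf_le ⟨0, by rintro _ ⟨v, rfl⟩; positivity⟩ (⟨p, hp⟩ : Y))
  exact (norm_eq_iInf_iff_real_inner_le_zero hY hp).1 this v hv

lemma two_mul_inner_le_of_forall_norm_sub_le (hY : Convex ℝ Y) {z z' G u : E} {η : ℝ}
    (hz' : z' ∈ Y) (hmin : ∀ v ∈ Y, ‖z + η • G - z'‖ ≤ ‖z + η • G - v‖) (hu : u ∈ Y) :
    2 * η * ⟪G, u - z'⟫_ℝ ≤ ‖u - z‖ ^ 2 - ‖u - z'‖ ^ 2 - ‖z' - z‖ ^ 2 := by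
  have hvi := real_inner_sub_sub_nonpos_of_forall_norm_sub_le hY hz' hmin hu
  rw [show z + η • G - z' = η • G - (z' - z) by abel, inner_sub_left,
    real_inner_smul_left] at hvi
  have hsq := norm_add_sq_real (u - z') (z' - z)
  rw [show u - z' + (z' - z) = u - z by abel, real_inner_comm] at hsq
  linarith

lemma inner_sub_sub_sq_eq (β : ℝ) (hβ : β ≠ 0) (W G u : E) :
    ⟪G, u - W⟫_ℝ - β / 2 * ‖u - W‖ ^ 2 = ‖G‖ ^ 2 / (2 * β) - β / 2 * ‖W + β⁻¹ • G - u‖ ^ 2 := by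
  rw [show W + β⁻¹ • G - u = β⁻¹ • G - (u - W) by abel, norm_sub_sq_real (β⁻¹ • G), norm_smul,
    real_inner_smul_left, mul_pow, Real.norm_eq_abs, sq_abs]
  field_simp
  ring

lemma inner_sub_sub_sq_le_of_norm_sub_le {β : ℝ} (hβ : 0 < β) {W G a v : E}
    (hmin : ‖W + β⁻¹ • G - a‖ ≤ ‖W + β⁻¹ • G - v‖) :
    ⟪G, v - W⟫_ℝ - β / 2 * ‖v - W‖ ^ 2 ≤ ⟪G, a - W⟫_ℝ - β / 2 * ‖a - W‖ ^ 2 := by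
  rw [inner_sub_sub_sq_eq β hβ.ne', inner_sub_sub_sq_eq β hβ.ne']
  gcongr

lemma accelerated_step_estimate {τ η β : ℝ} (hτ0 : 0 ≤ τ) (hτ1 : τ ≤ 1) (hη : 0 < η)
    (hβτη : β * τ * η ≤ 1) {G w y z z' u : E} {P fu Hk Hnext : ℝ} (hw : w = (1 - τ) • y + τ • z)
    (hu : fu ≤ P + ⟪G, u - w⟫_ℝ) (hk : Hk ≤ P + ⟪G, y - w⟫_ℝ)
    (hnext : ⟪G, τ • (z' - z)⟫_ℝ - β / 2 * ‖τ • (z' - z)‖ ^ 2 ≤ Hnext - P)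
    (hmirror : 2 * η * ⟪G, u - z'⟫_ℝ ≤ ‖u - z‖ ^ 2 - ‖u - z'‖ ^ 2 - ‖z' - z‖ ^ 2) :
    (1 - τ) * Hk + τ * fu ≤ Hnext + τ / (2 * η) * (‖u - z‖ ^ 2 - ‖u - z'‖ ^ 2) := by
  subst hw
  rw [show u - ((1 - τ) • y + τ • z) = (u - z') + (z' - z) - (1 - τ) • (y - z) by module,
    inner_sub_right, inner_add_right, real_inner_smul_right] at hu
  rw [show y - ((1 - τ) • y + τ • z) = τ • (y - z) by module, real_inner_smul_right] at hk
  rw [real_inner_smul_right, norm_smul, mul_pow, Real.norm_eq_abs, sq_abs] at hnext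
  set κ := τ / (2 * η)
  have hκ : 0 ≤ κ := by positivity
  have hκη : κ * (2 * η) = τ := div_mul_cancel₀ τ (by positivity)
  have hquad : β / 2 * τ ^ 2 ≤ κ := by
    calc β / 2 * τ ^ 2 = κ * (β * τ * η) := by rw [← hκη]; ring
      _ ≤ κ := mul_le_of_le_one_right hκ hβτη
  have hd := sq_nonneg ‖z' - z‖
  nlinarith [mul_le_mul_of_nonneg_left hmirror hκ, mul_le_mul_of_nonneg_left hk (sub_nonneg.2 hτ1),
    mul_le_mul_of_nonneg_left hu hτ0, mul_le_mul_of_nonneg_right hquad hd]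

lemma diag_step_estimate [CompleteSpace E] (hY : Convex ℝ Y) {f : E → ℝ}
    (hf : Differentiable ℝ f) (hconc : ConcaveOn ℝ Y f) {L β : ℝ} (hL0 : 0 ≤ L)
    (hLip : ∀ a b, ‖gradient f a - gradient f b‖ ≤ L * ‖a - b‖) (hLβ : 2 * L ≤ β) (hβ : 0 < β)
    {k : ℝ} (hk : 0 ≤ k) {y z w y' z' u : E} (hy : y ∈ Y) (hz : z ∈ Y) (hz' : z' ∈ Y) (hu : u ∈ Y)
    (hw : w = (1 - 2 / (k + 2)) • y + (2 / (k + 2)) • z)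
    (hy'proj : ∀ v ∈ Y, ‖w + β⁻¹ • gradient f w - y'‖ ≤ ‖w + β⁻¹ • gradient f w - v‖)
    (hz'proj : ∀ v ∈ Y, ‖z + ((k + 1) / (2 * β)) • gradient f w - z'‖ ≤
      ‖z + ((k + 1) / (2 * β)) • gradient f w - v‖)
    {Hk Hnext : ℝ} (hHk : Hk ≤ f y) (hHnext : f y' ≤ Hnext) :
    2 * (k + 1) * f u ≤
      (k + 1) * (k + 2) * Hnext - k * (k + 1) * Hk + 2 * β * (‖u - z‖ ^ 2 - ‖u - z'‖ ^ 2) := by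
  set τ := 2 / (k + 2) with hτ
  have hτ0 : 0 ≤ τ := by positivity
  have hτ1 : τ ≤ 1 := by rw [hτ, div_le_one (by positivity)]; linarith
  have hwY : w ∈ Y := hw ▸ hY hy hz (sub_nonneg.2 hτ1) hτ0 (sub_add_cancel 1 τ)
  have hvY : (1 - τ) • y + τ • z' ∈ Y := hY hy hz' (sub_nonneg.2 hτ1) hτ0 (sub_add_cancel 1 τ)
  have hnext : ⟪gradient f w, τ • (z' - z)⟫_ℝ - β / 2 * ‖τ • (z' - z)‖ ^ 2 ≤ Hnext - f w := by
    have hproj := inner_sub_sub_sq_le_of_norm_sub_le hβ (hy'proj _ hvY)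
    rw [show (1 - τ) • y + τ • z' - w = τ • (z' - z) by rw [hw]; module] at hproj
    have hdesc := add_inner_gradient_sub_le_of_lipschitz_gradient hf hL0 hLip w y'
    nlinarith [sq_nonneg ‖y' - w‖]
  have key := accelerated_step_estimate (η := (k + 1) / (2 * β)) hτ0 hτ1 (by positivity)
    (by rw [hτ]; field_simp; linarith) hw (hconc.le_add_inner_gradient (hf w) hwY hu)
    (hHk.trans (hconc.le_add_inner_gradient (hf w) hwY hy)) hnext
    (two_mul_inner_le_of_forall_norm_sub_le hY hz' hz'proj hu)
  rw [hτ] at key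
  field_simp at key
  linarith

end

lemma sum_Icc_le_sub_add_sum {a e F : ℕ → ℝ} (h : ∀ k, a (k + 1) ≤ F (k + 1) - F k + e (k + 1))
    (K : ℕ) : ∑ k ∈ Icc 1 K, a k ≤ F K - F 0 + ∑ k ∈ Icc 1 K, e k := by
  induction K with
  | zero => simp
  | succ n ih =>
    rw [sum_Icc_succ_top (by omega), sum_Icc_succ_top (by omega)]
    linarith [h n]

lemma sum_Icc_one_natCast (K : ℕ) : ∑ i ∈ Icc 1 K, (i : ℝ) = K * (K + 1) / 2 := by
  induction K with
  | zero => simp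
  | succ n ih =>
    rw [sum_Icc_succ_top (by omega), ih]
    push_cast
    ring

lemma ConvexOn.mul_map_sum_Icc_le {F : Type*} [AddCommGroup F] [Module ℝ F] {φ : F → ℝ}
    (hφ : ConvexOn ℝ univ φ) {K : ℕ} (hK : 1 ≤ K) (x : ℕ → F) :
    K * (K + 1) * φ ((2 / ((K : ℝ) * (K + 1))) • ∑ i ∈ Icc 1 K, (i : ℝ) • x i) ≤
      2 * ∑ i ∈ Icc 1 K, i * φ (x i) := by
  have hK : (0 : ℝ) < K * (K + 1) := by have : (1 : ℝ) ≤ K := mod_cast hK; positivity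
  rw [← le_div_iff₀' hK, mul_div_right_comm]
  have := hφ.map_centerMass_le (t := Icc 1 K) (w := fun i => (i : ℝ)) (p := x)
    (fun i _ => by positivity) (by rw [sum_Icc_one_natCast]; positivity) (fun _ _ => mem_univ _)
  simpa [centerMass, sum_Icc_one_natCast, mul_sum] using this

theorem stmt_10_general {p q : ℕ} (Y : Set (EuclideanSpace ℝ (Fin q)))
    (hYconv : Convex ℝ Y)
    (D : ℝ) (hD : ∀ a ∈ Y, ∀ b ∈ Y, ‖a - b‖ ≤ D)
    (g : EuclideanSpace ℝ (Fin p) × EuclideanSpace ℝ (Fin q) → ℝ) (L σ : ℝ)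
    (hσ : 0 < σ) (hσL : σ ≤ L)
    (hdx : ∀ y, Differentiable ℝ fun x => g (x, y))
    (hdy : ∀ x, Differentiable ℝ fun y => g (x, y))
    (hsmooth : ∀ x y x' y',
      ‖gradient (fun z => g (z, y)) x - gradient (fun z => g (z, y')) x'‖ ≤
          L * (‖x - x'‖ + ‖y - y'‖) ∧
      ‖gradient (fun z => g (x, z)) y - gradient (fun z => g (x', z)) y'‖ ≤
          L * (‖x - x'‖ + ‖y - y'‖))
    (hsc : ∀ y, ConvexOn ℝ Set.univ fun x => g (x, y) - σ / 2 * ‖x‖ ^ 2)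
    (hconc : ∀ x, ConcaveOn ℝ Y fun y => g (x, y))
    (β : ℝ) (hβ : β = 2 * L ^ 2 / σ)
    (εstep : ℕ → ℝ)
    (x : ℕ → EuclideanSpace ℝ (Fin p)) (y z w : ℕ → EuclideanSpace ℝ (Fin q))
    (hy0 : y 0 ∈ Y) (hz0 : z 0 = y 0)
    (hw : ∀ k, w k = (1 - 2 / ((k : ℝ) + 2)) • y k + (2 / ((k : ℝ) + 2)) • z k)
    (hxstep : ∀ k, g (x (k + 1), y (k + 1)) ≤
        (⨅ x' : EuclideanSpace ℝ (Fin p), g (x', y (k + 1))) + εstep (k + 1))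
    (hymem : ∀ k, y (k + 1) ∈ Y)
    (hyproj : ∀ k, ∀ v ∈ Y,
      ‖w k + β⁻¹ • gradient (fun y' => g (x (k + 1), y')) (w k) - y (k + 1)‖ ≤
        ‖w k + β⁻¹ • gradient (fun y' => g (x (k + 1), y')) (w k) - v‖)
    (hzmem : ∀ k, z (k + 1) ∈ Y)
    (hzproj : ∀ k, ∀ v ∈ Y,
      ‖z k + (((k : ℝ) + 1) / (2 * β)) • gradient (fun y' => g (x (k + 1), y')) (w k)
          - z (k + 1)‖ ≤
        ‖z k + (((k : ℝ) + 1) / (2 * β)) • gradient (fun y' => g (x (k + 1), y')) (w k) - v‖)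
    (K : ℕ) (hK : 1 ≤ K)
    (xbar : EuclideanSpace ℝ (Fin p))
    (hxbar : xbar = (2 / ((K : ℝ) * ((K : ℝ) + 1))) • ∑ i ∈ Finset.Icc 1 K, (i : ℝ) • x i) :
    ∀ ytil ∈ Y, ∀ xtil : EuclideanSpace ℝ (Fin p),
      g (xbar, ytil) - g (xtil, y K) ≤
        (4 * (L ^ 2 / σ) * D ^ 2 +
            ∑ k ∈ Finset.Icc 1 K, ((k : ℝ) * ((k : ℝ) + 1)) * εstep k) /
          ((K : ℝ) * ((K : ℝ) + 1)) := by
  intro u hu xtil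
  have hL : 0 < L := hσ.trans_le hσL
  have hβpos : 0 < β := by rw [hβ]; positivity
  have hLβ : 2 * L ≤ β := by
    rw [hβ, le_div_iff₀ hσ]; nlinarith
  have hyY : ∀ k, y k ∈ Y := fun k => k.casesOn hy0 hymem
  have hzY : ∀ k, z k ∈ Y := fun k => k.casesOn (hz0 ▸ hy0) hzmem
  -- strong convexity bounds `g (·, v)` below, so `⨅` is a true infimum, not the junk value `0`
  have hdual : ∀ v x', (⨅ x'', g (x'', v)) ≤ g (x', v) := fun v =>
    ciInf_le (bddBelow_range_of_convexOn_sub_sq (hdx v) hσ (hsc v))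
  have hstep := fun k : ℕ => diag_step_estimate hYconv (hdy (x (k + 1))) (hconc _) hL.le
    (fun a b => by simpa using (hsmooth (x (k + 1)) a (x (k + 1)) b).2) hLβ hβpos k.cast_nonneg
    (hyY k) (hzY k) (hzY (k + 1)) hu (hw k) (hyproj k) (hzproj k) (hdual _ _) (hxstep k)
  have htelescope := sum_Icc_le_sub_add_sum (a := fun k => 2 * (k * g (x k, u)))
    (F := fun k => k * (k + 1) * (⨅ x', g (x', y k)) - 2 * β * ‖u - z k‖ ^ 2)
    (e := fun k => k * (k + 1) * εstep k) (fun k => by push_cast; linarith [hstep k]) K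
  rw [← mul_sum, Nat.cast_zero, zero_mul, zero_mul] at htelescope
  have hjensen := ((strongConvexOn_iff_convex.mpr (hsc u)).convexOn fun _ => by
    positivity).mul_map_sum_Icc_le hK x
  rw [← hxbar] at hjensen
  have hz0D : 2 * β * ‖u - z 0‖ ^ 2 ≤ 4 * (L ^ 2 / σ) * D ^ 2 := by
    calc 2 * β * ‖u - z 0‖ ^ 2 ≤ 2 * β * D ^ 2 := by gcongr; exact hD u hu (z 0) (hz0 ▸ hy0)
      _ = 4 * (L ^ 2 / σ) * D ^ 2 := by rw [hβ]; ring
  have hKpos : (0 : ℝ) < K * (K + 1) := by have : (1 : ℝ) ≤ K := mod_cast hK; positivity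
  rw [le_div_iff₀ hKpos]
  nlinarith [mul_le_mul_of_nonneg_left (hdual (y K) xtil) hKpos.le, sq_nonneg ‖u - z K‖]

/-- Theorem 1, general tolerance version: convergence of the DIAG
iteration for smooth strongly-convex–concave minimax problems. With `β = 2L²/σ`,
`τ_k = 2/(k+2)`, `η_k = (k+1)/(2β)`, inexact minimization tolerances `ε_step`, and the
stated updates, the primal-dual gap of `(x̄_K, y_K)` is at most
`(4(L²/σ)D_𝒴² + Σ_{k=1}^K k(k+1) ε_step^{(k)}) / (K(K+1))`. -/
theorem stmt_10 {p q : ℕ} (Y : Set (EuclideanSpace ℝ (Fin q))) (hYne : Y.Nonempty)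
    (hYcomp : IsCompact Y) (hYconv : Convex ℝ Y)
    (D : ℝ) (hD : ∀ a ∈ Y, ∀ b ∈ Y, ‖a - b‖ ≤ D)
    (g : EuclideanSpace ℝ (Fin p) × EuclideanSpace ℝ (Fin q) → ℝ) (L σ : ℝ)
    (hσ : 0 < σ) (hσL : σ ≤ L)
    (hdx : ∀ y, Differentiable ℝ fun x => g (x, y))
    (hdy : ∀ x, Differentiable ℝ fun y => g (x, y))
    (hsmooth : ∀ x y x' y',
      ‖gradient (fun z => g (z, y)) x - gradient (fun z => g (z, y')) x'‖ ≤
          L * (‖x - x'‖ + ‖y - y'‖) ∧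
      ‖gradient (fun z => g (x, z)) y - gradient (fun z => g (x', z)) y'‖ ≤
          L * (‖x - x'‖ + ‖y - y'‖))
    (hsc : ∀ y, ConvexOn ℝ Set.univ fun x => g (x, y) - σ / 2 * ‖x‖ ^ 2)
    (hconc : ∀ x, ConcaveOn ℝ Y fun y => g (x, y))
    (β : ℝ) (hβ : β = 2 * L ^ 2 / σ)
    (εstep : ℕ → ℝ) (hεnn : ∀ k, 0 ≤ εstep k)
    (x : ℕ → EuclideanSpace ℝ (Fin p)) (y z w : ℕ → EuclideanSpace ℝ (Fin q))
    (hy0 : y 0 ∈ Y) (hz0 : z 0 = y 0)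
    (hw : ∀ k, w k = (1 - 2 / ((k : ℝ) + 2)) • y k + (2 / ((k : ℝ) + 2)) • z k)
    (hxstep : ∀ k, g (x (k + 1), y (k + 1)) ≤
        (⨅ x' : EuclideanSpace ℝ (Fin p), g (x', y (k + 1))) + εstep (k + 1))
    (hymem : ∀ k, y (k + 1) ∈ Y)
    (hyproj : ∀ k, ∀ v ∈ Y,
      ‖w k + β⁻¹ • gradient (fun y' => g (x (k + 1), y')) (w k) - y (k + 1)‖ ≤
        ‖w k + β⁻¹ • gradient (fun y' => g (x (k + 1), y')) (w k) - v‖)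
    (hzmem : ∀ k, z (k + 1) ∈ Y)
    (hzproj : ∀ k, ∀ v ∈ Y,
      ‖z k + (((k : ℝ) + 1) / (2 * β)) • gradient (fun y' => g (x (k + 1), y')) (w k)
          - z (k + 1)‖ ≤
        ‖z k + (((k : ℝ) + 1) / (2 * β)) • gradient (fun y' => g (x (k + 1), y')) (w k) - v‖)
    (K : ℕ) (hK : 1 ≤ K)
    (xbar : EuclideanSpace ℝ (Fin p))
    (hxbar : xbar = (2 / ((K : ℝ) * ((K : ℝ) + 1))) • ∑ i ∈ Finset.Icc 1 K, (i : ℝ) • x i) :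
    ∀ ytil ∈ Y, ∀ xtil : EuclideanSpace ℝ (Fin p),
      g (xbar, ytil) - g (xtil, y K) ≤
        (4 * (L ^ 2 / σ) * D ^ 2 +
            ∑ k ∈ Finset.Icc 1 K, ((k : ℝ) * ((k : ℝ) + 1)) * εstep k) /
          ((K : ℝ) * ((K : ℝ) + 1)) :=
  stmt_10_general Y hYconv D hD g L σ hσ hσL hdx hdy hsmooth hsc hconc β hβ εstep x y z w hy0 hz0 hw
    hxstep hymem hyproj hzmem hzproj K hK xbar hxbar
end

section
/- Let 𝒴 ⊆ ℝ^q be a nonempty compact convex set, let g : ℝ^p × 𝒴 → ℝ be L-smooth with g(x, ·) concave for every x, and let f(x) = max_{y ∈ 𝒴} g(x, y) be bounded below by f* > −∞. Fix ε > 0 and set ε̃ = ε²/(64L). Suppose a sequence (x_k)_{k ≥ 0} starting from x₀ satisfies, for every k, the proximal accuracy condition f(x_{k+1}) + L‖x_{k+1} − x_k‖² ≤ min_{x ∈ ℝ^p} [ f(x) + L‖x − x_k‖² ] + ε̃/4. Then there exists an index k ≤ ⌈4⁴ L (f(x₀) − f*) / (3ε²)⌉ at which the termination condition f(x_k) − 3ε̃/4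 ≤ f(x_{k+1}) + L‖x_{k+1} − x_k‖² holds, and for any such k the point x_k is an ε-FOSP of f, i.e. ‖∇f_{1/(2L)}(x_k)‖ ≤ ε. -/
/-!
Each `g(·, y)` has an `L`-Lipschitz gradient, so `g(·, y) + (L/2)‖·‖²` has a monotone derivative
and is convex; the maximum over the compact set `𝒴` is attained, hence `f + (L/2)‖·‖²` is convex
as well. Then `x ↦ f x + L‖v - x‖²` is `L`-strongly convex and has an exact minimiser `w`, the
proximal point of `v`, with `f w + L‖v - w‖² + (L/2)‖v - w‖² ≤ f v`.

Termination: as long as the test fails, `f(x_k)` drops by `3ε̃/4` per step, which the lower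
bound `f*` allows only `⌈(f(x₀) - f*)/(3ε̃/4)⌉` times. Stationarity: when the test holds,
`f(x_k) ≤ f_{1/(2L)}(x_k) + ε̃`, so `(L/2)‖x_k - w‖² ≤ ε̃`. The envelope lies below the quadratic
`u ↦ f w + L‖u - w‖²` and touches it at `x_k`, so its gradient there is `2L(x_k - w)`, of norm at
most `√(8Lε̃) < ε`.
-/

open Set Filter Topology
open scoped RealInnerProductSpace

variable {E : Type*} [NormedAddCommGroup E]

theorem exists_le_ceil_sub_le_of_le {u v : ℕ → ℝ} {m c : ℝ} (hc : 0 < c) (hm : ∀ k, m ≤ u k)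
    (huv : ∀ k, u (k + 1) ≤ v k) : ∃ k ≤ ⌈(u 0 - m) / c⌉₊, u k - c ≤ v k := by
  by_contra! hdesc
  set N := ⌈(u 0 - m) / c⌉₊
  have hdrop : ∀ k ≤ N + 1, u k + k * c ≤ u 0 := by
    intro k hk
    induction k with
    | zero => simp
    | succ k ih =>
      have := hdesc k (by omega)
      have := huv k
      have := ih (by omega)
      push_cast
      linarith
  have hN : u 0 - m ≤ N * c := (div_le_iff₀ hc).1 (Nat.le_ceil _)
  have hlast := hdrop (N + 1) le_rfl
  have hbound := hm (N + 1)
  push_cast at hlast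
  linarith

theorem convexOn_univ_of_hasFDerivAt_of_monotone [NormedSpace ℝ E] {G : E → ℝ}
    {G' : E → E →L[ℝ] ℝ} (hG : ∀ x, HasFDerivAt G (G' x) x)
    (hmono : ∀ x y, 0 ≤ (G' x - G' y) (x - y)) : ConvexOn ℝ univ G := by
  refine ⟨convex_univ, fun x _ y _ a b ha hb hab => ?_⟩
  set d := y - x
  have hline : ∀ t : ℝ, HasDerivAt (fun s : ℝ => G (x + s • d)) (G' (x + t • d) d) t := fun t =>
    (hG _).comp_hasDerivAt t (((hasDerivAt_id t).smul_const d).const_add x |>.congr_deriv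
      (one_smul ℝ d))
  -- `(t - s) * (q' t - q' s)` is the monotonicity pairing of `G'` at `x + t • d` and `x + s • d`
  have hq_mono : Monotone fun t : ℝ => G' (x + t • d) d := by
    intro s t hst
    have h := hmono (x + t • d) (x + s • d)
    rw [add_sub_add_left_eq_sub, ← sub_smul, map_smul, smul_eq_mul, sub_apply] at h
    rcases hst.eq_or_lt with rfl | hlt
    · exact le_rfl
    · exact sub_nonneg.1 (nonneg_of_mul_nonneg_right h (sub_pos.2 hlt))
  have hderiv : deriv (fun s : ℝ => G (x + s • d)) = fun t => G' (x + t • d) d :=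
    funext fun t => (hline t).deriv
  have hq := (hderiv ▸ hq_mono).convexOn_univ_of_deriv fun t => (hline t).differentiableAt
  have key := hq.2 (mem_univ 0) (mem_univ 1) ha hb hab
  have hseg : x + (a • (0 : ℝ) + b • (1 : ℝ)) • d = a • x + b • y := by
    rw [smul_zero, zero_add, smul_eq_mul, mul_one, eq_sub_of_add_eq hab, sub_smul, one_smul,
      smul_sub]
    abel
  simpa only [hseg, zero_smul, add_zero, one_smul, d, add_sub_cancel] using key

theorem convexOn_of_forall_le_of_exists_eq [NormedSpace ℝ E] {ι : Type*} {s : Set E}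
    {f : E → ℝ} {h : ι → E → ℝ} (hs : Convex ℝ s) (hh : ∀ i, ConvexOn ℝ s (h i))
    (hle : ∀ i, ∀ x ∈ s, h i x ≤ f x) (heq : ∀ x ∈ s, ∃ i, h i x = f x) : ConvexOn ℝ s f := by
  refine ⟨hs, fun x hx y hy a b ha hb hab => ?_⟩
  obtain ⟨i, hi⟩ := heq _ (hs hx hy ha hb hab)
  calc f (a • x + b • y) = h i (a • x + b • y) := hi.symm
    _ ≤ a • h i x + b • h i y := (hh i).2 hx hy ha hb hab
    _ ≤ a • f x + b • f y := by
      gcongr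
      exacts [hle i x hx, hle i y hy]

section MoreauEnvelope

variable {F : E → ℝ} {L m : ℝ}

/-- The Moreau envelope `F_{1/(2L)}`, indexed by the weight `L` of the quadratic. -/
noncomputable def moreauEnv (F : E → ℝ) (L : ℝ) (v : E) : ℝ :=
  ⨅ x, F x + L * ‖v - x‖ ^ 2

theorem moreauEnv_le (hFm : ∀ x, m ≤ F x) (hL : 0 ≤ L) (v w : E) :
    moreauEnv F L v ≤ F w + L * ‖v - w‖ ^ 2 :=
  ciInf_le ⟨m, by rintro _ ⟨x, rfl⟩; nlinarith [hFm x, sq_nonneg ‖v - x‖]⟩ w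

theorem moreauEnv_eq_of_forall_le {v w : E}
    (hw : ∀ x, F w + L * ‖v - w‖ ^ 2 ≤ F x + L * ‖v - x‖ ^ 2) :
    moreauEnv F L v = F w + L * ‖v - w‖ ^ 2 :=
  IsGLB.ciInf_eq (IsLeast.isGLB ⟨⟨w, rfl⟩, by rintro _ ⟨x, rfl⟩; exact hw x⟩)

theorem exists_forall_add_mul_norm_sub_sq_le [ProperSpace E] (hF : Continuous F)
    (hFm : ∀ x, m ≤ F x) (hL : 0 < L) (v : E) :
    ∃ w, ∀ x, F w + L * ‖v - w‖ ^ 2 ≤ F x + L * ‖v - x‖ ^ 2 := by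
  refine (hF.add (by fun_prop)).exists_forall_le (tendsto_atTop_add_left_of_le _ m hFm ?_)
  have hdist : Tendsto (fun x => ‖v - x‖) (cocompact E) atTop :=
    tendsto_atTop_mono (fun x => by rw [norm_sub_rev]; exact norm_sub_norm_le x v)
      (tendsto_atTop_add_const_right _ _ tendsto_norm_cocompact_atTop)
  exact ((tendsto_pow_atTop two_ne_zero).comp hdist).const_mul_atTop hL

end MoreauEnvelope

section InnerProductSpace

variable [InnerProductSpace ℝ E]

theorem hasFDerivAt_mul_norm_sub_sq (c : ℝ) (w x : E) :
    HasFDerivAt (fun x => c * ‖x - w‖ ^ 2) ((2 * c) • innerSL ℝ (x - w)) x := by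
  refine (((hasFDerivAt_id x).sub_const w).norm_sq.const_mul c).congr_fderiv ?_
  ext y
  simp only [smul_apply, ContinuousLinearMap.comp_apply, ContinuousLinearMap.coe_id', id_eq,
    innerSL_apply_apply, smul_eq_mul, nsmul_eq_mul]
  push_cast
  ring

theorem strongConvexOn_add_mul_norm_sub_sq {F : E → ℝ} {ρ : ℝ}
    (hF : ConvexOn ℝ univ fun x => F x + ρ / 2 * ‖x‖ ^ 2) (L : ℝ) (v : E) :
    StrongConvexOn univ (2 * L - ρ) fun x => F x + L * ‖v - x‖ ^ 2 := by
  rw [strongConvexOn_iff_convex]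
  refine ((hF.add ((-(2 * L) • innerₗ E v).convexOn convex_univ)).add_const (L * ‖v‖ ^ 2)).congr
    fun x _ => ?_
  simp only [Pi.add_apply, LinearMap.smul_apply, innerₗ_apply_apply, smul_eq_mul,
    norm_sub_sq_real]
  ring

theorem StrongConvexOn.add_half_mul_sq_norm_le {s : Set E} {m : ℝ} {ψ : E → ℝ}
    (hψ : StrongConvexOn s m ψ) {w z : E} (hw : w ∈ s) (hz : z ∈ s) (hmin : IsMinOn ψ s w) :
    ψ w + m / 2 * ‖z - w‖ ^ 2 ≤ ψ z := by
  -- compare `ψ w` with `ψ ((1 - t) • w + t • z)` and let `t → 0⁺`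
  have hlim : Tendsto (fun t : ℝ => ψ w + (1 - t) * (m / 2 * ‖z - w‖ ^ 2)) (𝓝[>] 0)
      (𝓝 (ψ w + m / 2 * ‖z - w‖ ^ 2)) := by
    refine tendsto_nhdsWithin_of_tendsto_nhds ?_
    have hc : Continuous fun t : ℝ => ψ w + (1 - t) * (m / 2 * ‖z - w‖ ^ 2) := by fun_prop
    simpa using hc.tendsto 0
  refine le_of_tendsto hlim ?_
  filter_upwards [Ioo_mem_nhdsGT one_pos] with t ⟨ht0, ht1⟩
  have hconv := hψ.2 hw hz (sub_nonneg.2 ht1.le) ht0.le (sub_add_cancel 1 t)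
  have hmin' := hmin (hψ.1 hw hz (sub_nonneg.2 ht1.le) ht0.le (sub_add_cancel 1 t))
  rw [norm_sub_rev] at hconv
  simp only [smul_eq_mul, mem_ofPred_eq] at hconv hmin'
  nlinarith

variable [CompleteSpace E]

theorem convexOn_add_half_mul_sq_norm_of_lipschitz_gradient {G : E → ℝ} {L : ℝ}
    (hG : Differentiable ℝ G) (hlip : ∀ x y, ‖gradient G x - gradient G y‖ ≤ L * ‖x - y‖) :
    ConvexOn ℝ univ fun x => G x + L / 2 * ‖x‖ ^ 2 := by
  refine convexOn_univ_of_hasFDerivAt_of_monotone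
    (fun x => (hG x).hasFDerivAt.add (by simpa using hasFDerivAt_mul_norm_sub_sq (L / 2) 0 x))
    fun x y => ?_
  have hcs : -(L * ‖x - y‖ ^ 2) ≤ ⟪gradient G x - gradient G y, x - y⟫ := by
    refine le_trans ?_ (neg_le_of_abs_le (abs_real_inner_le_norm _ _))
    rw [sq, ← mul_assoc]
    exact neg_le_neg (mul_le_mul_of_nonneg_right (hlip x y) (norm_nonneg _))
  have hquad : 2 * (L / 2) * ⟪x, x - y⟫ - 2 * (L / 2) * ⟪y, x - y⟫ = L * ‖x - y‖ ^ 2 := by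
    rw [← real_inner_self_eq_norm_sq, inner_sub_left]
    ring
  rw [inner_sub_left] at hcs
  simp only [add_apply, sub_apply, smul_apply, innerSL_apply_apply, smul_eq_mul,
    ← inner_gradient_left]
  linarith

theorem convexOn_sSup_image_add_half_mul_sq_norm {Z : Type*} [TopologicalSpace Z] {Y : Set Z}
    (hYne : Y.Nonempty) (hYc : IsCompact Y) {g : E × Z → ℝ} {L : ℝ}
    (hdx : ∀ y, Differentiable ℝ fun x => g (x, y))
    (hcont : ∀ x, ContinuousOn (fun y => g (x, y)) Y)
    (hlip : ∀ y x x', ‖gradient (fun z => g (z, y)) x - gradient (fun z => g (z, y)) x'‖ ≤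
      L * ‖x - x'‖) :
    ConvexOn ℝ univ fun x => sSup ((fun y => g (x, y)) '' Y) + L / 2 * ‖x‖ ^ 2 := by
  have hmax := fun x => hYc.exists_sSup_image_eq_and_ge hYne (hcont x)
  refine convexOn_of_forall_le_of_exists_eq (h := fun (y : Y) x => g (x, y) + L / 2 * ‖x‖ ^ 2)
    convex_univ (fun y => convexOn_add_half_mul_sq_norm_of_lipschitz_gradient (hdx y) (hlip y))
    (fun y x _ => ?_) (fun x _ => ?_)
  · obtain ⟨y₀, -, hy₀, hge⟩ := hmax x
    rw [hy₀]
    gcongr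
    exact hge y y.2
  · obtain ⟨y₀, hy₀Y, hy₀, -⟩ := hmax x
    exact ⟨⟨y₀, hy₀Y⟩, by rw [hy₀]⟩

variable {F : E → ℝ} {L m : ℝ}

theorem hasGradientAt_moreauEnv (hFm : ∀ x, m ≤ F x) (hL : 0 ≤ L) {v w : E}
    (hw : ∀ x, F w + L * ‖v - w‖ ^ 2 ≤ F x + L * ‖v - x‖ ^ 2)
    (hd : DifferentiableAt ℝ (moreauEnv F L) v) :
    HasGradientAt (moreauEnv F L) ((2 * L) • (v - w)) v := by
  have hq : HasFDerivAt (fun u => F w + L * ‖u - w‖ ^ 2) ((2 * L) • innerSL ℝ (v - w)) v :=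
    (hasFDerivAt_mul_norm_sub_sq L w v).const_add (F w)
  have hmin : IsLocalMin (fun u => F w + L * ‖u - w‖ ^ 2 - moreauEnv F L u) v := by
    refine Eventually.of_forall fun u => ?_
    dsimp only
    rw [moreauEnv_eq_of_forall_le hw, norm_sub_rev v w, sub_self, sub_nonneg]
    exact moreauEnv_le hFm hL u w
  have h0 := hmin.hasFDerivAt_eq_zero (hq.sub hd.hasFDerivAt)
  refine hasGradientAt_iff_hasFDerivAt.2 (hd.hasFDerivAt.congr_fderiv ?_)
  rw [← sub_eq_zero.1 h0]
  ext u
  simp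

theorem norm_gradient_moreauEnv_le (hFm : ∀ x, m ≤ F x) (hL : 0 ≤ L) {v w : E}
    (hw : ∀ x, F w + L * ‖v - w‖ ^ 2 ≤ F x + L * ‖v - x‖ ^ 2) :
    ‖gradient (moreauEnv F L) v‖ ≤ 2 * L * ‖v - w‖ := by
  by_cases hd : DifferentiableAt ℝ (moreauEnv F L) v
  · rw [(hasGradientAt_moreauEnv hFm hL hw hd).gradient, norm_smul,
      Real.norm_of_nonneg (by positivity)]
  · rw [gradient_eq_zero_of_not_differentiableAt hd, norm_zero]
    positivity

theorem sq_norm_gradient_moreauEnv_le [FiniteDimensional ℝ E]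
    (hF : ConvexOn ℝ univ fun x => F x + L / 2 * ‖x‖ ^ 2) (hFm : ∀ x, m ≤ F x) (hL : 0 < L)
    {v : E} {δ : ℝ} (hv : F v ≤ moreauEnv F L v + δ) :
    ‖gradient (moreauEnv F L) v‖ ^ 2 ≤ 8 * L * δ := by
  have hFc : Continuous F :=
    ((continuousOn_univ.1 (hF.continuousOn isOpen_univ)).sub
      (by fun_prop : Continuous fun x : E => L / 2 * ‖x‖ ^ 2)).congr
      fun x => add_sub_cancel_right _ _
  obtain ⟨w, hw⟩ := exists_forall_add_mul_norm_sub_sq_le hFc hFm hL v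
  have hprox := (strongConvexOn_add_mul_norm_sub_sq hF L v).add_half_mul_sq_norm_le (mem_univ w)
    (mem_univ v) fun x _ => hw x
  have hgrad := norm_gradient_moreauEnv_le hFm hL.le hw
  rw [moreauEnv_eq_of_forall_le hw] at hv
  simp only [sub_self, norm_zero] at hprox
  calc ‖gradient (moreauEnv F L) v‖ ^ 2 ≤ (2 * L * ‖v - w‖) ^ 2 := by gcongr
    _ ≤ 8 * L * δ := by nlinarith

end InnerProductSpace

theorem stmt_17_general {p q : ℕ} (Y : Set (EuclideanSpace ℝ (Fin q))) (hYne : Y.Nonempty)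
    (hYcomp : IsCompact Y)
    (g : EuclideanSpace ℝ (Fin p) × EuclideanSpace ℝ (Fin q) → ℝ) (L : ℝ) (hL : 0 < L)
    (hdx : ∀ y, Differentiable ℝ fun x => g (x, y))
    (hdy : ∀ x, Differentiable ℝ fun y => g (x, y))
    (hsmooth : ∀ x y x' y',
      ‖gradient (fun z => g (z, y)) x - gradient (fun z => g (z, y')) x'‖ ≤
          L * (‖x - x'‖ + ‖y - y'‖) ∧
      ‖gradient (fun z => g (x, z)) y - gradient (fun z => g (x', z)) y'‖ ≤
          L * (‖x - x'‖ + ‖y - y'‖))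
    (f : EuclideanSpace ℝ (Fin p) → ℝ)
    (hf : ∀ x, f x = sSup ((fun y => g (x, y)) '' Y))
    (fstar : ℝ) (hlb : ∀ x, fstar ≤ f x)
    (ε : ℝ) (hε : 0 < ε)
    (x : ℕ → EuclideanSpace ℝ (Fin p))
    (hstep : ∀ k, f (x (k + 1)) + L * ‖x (k + 1) - x k‖ ^ 2 ≤
        (⨅ x' : EuclideanSpace ℝ (Fin p), f x' + L * ‖x' - x k‖ ^ 2) +
          ε ^ 2 / (64 * L) / 4) :
    (∃ k ≤ ⌈(4 : ℝ) ^ 4 * L * (f (x 0) - fstar) / (3 * ε ^ 2)⌉₊,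
      f (x k) - 3 * (ε ^ 2 / (64 * L)) / 4 ≤ f (x (k + 1)) + L * ‖x (k + 1) - x k‖ ^ 2) ∧
    (∀ k, f (x k) - 3 * (ε ^ 2 / (64 * L)) / 4 ≤ f (x (k + 1)) + L * ‖x (k + 1) - x k‖ ^ 2 →
      ‖gradient
          (fun v => ⨅ x' : EuclideanSpace ℝ (Fin p), f x' + L * ‖v - x'‖ ^ 2) (x k)‖ ≤ ε) := by
  have hweak : ConvexOn ℝ univ fun x => f x + L / 2 * ‖x‖ ^ 2 := by
    simp only [hf]
    exact convexOn_sSup_image_add_half_mul_sq_norm hYne hYcomp hdx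
      (fun x => (hdy x).continuous.continuousOn) fun y a b => by simpa using (hsmooth a y b y).1
  refine ⟨?_, fun k hk => ?_⟩
  · have hdescent := exists_le_ceil_sub_le_of_le (u := fun k => f (x k))
      (v := fun k => f (x (k + 1)) + L * ‖x (k + 1) - x k‖ ^ 2)
      (c := 3 * (ε ^ 2 / (64 * L)) / 4) (by positivity) (fun k => hlb _)
      fun k => le_add_of_nonneg_right (by positivity)
    have hceil : (f (x 0) - fstar) / (3 * (ε ^ 2 / (64 * L)) / 4) =
        4 ^ 4 * L * (f (x 0) - fstar) / (3 * ε ^ 2) := by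
      field_simp
      ring
    rwa [hceil] at hdescent
  · have henv : (⨅ x', f x' + L * ‖x' - x k‖ ^ 2) = moreauEnv f L (x k) :=
      iInf_congr fun x' => by rw [norm_sub_rev]
    have hgap : f (x k) ≤ moreauEnv f L (x k) + ε ^ 2 / (64 * L) := by linarith [hstep k]
    refine (pow_le_pow_iff_left₀ (norm_nonneg _) hε.le two_ne_zero).1 ?_
    calc _ ≤ 8 * L * (ε ^ 2 / (64 * L)) := sq_norm_gradient_moreauEnv_le hweak hlb hL hgap
      _ ≤ ε ^ 2 := by
        field_simp
        nlinarith

/-- Theorem 2, outer iteration of Prox-DIAG: let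
`f(x) = max_{y ∈ 𝒴} g(x, y)` with `g` `L`-smooth, `g(x,·)` concave on the nonempty
compact convex set `𝒴`, and `f ≥ f* > −∞`. Fix `ε > 0` and `ε̃ = ε²/(64L)`. If the
sequence `(x_k)` satisfies the proximal accuracy condition
`f(x_{k+1}) + L‖x_{k+1} − x_k‖² ≤ min_x [f(x) + L‖x − x_k‖²] + ε̃/4` for all `k`, then
the termination condition `f(x_k) − 3ε̃/4 ≤ f(x_{k+1}) + L‖x_{k+1} − x_k‖²` holds for
some `k ≤ ⌈4⁴L(f(x₀) − f*)/(3ε²)⌉`, and any `x_k` satisfying it is an `ε`-FOSP of `f`,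
i.e. `‖∇f_{1/(2L)}(x_k)‖ ≤ ε`. -/
theorem stmt_17 {p q : ℕ} (Y : Set (EuclideanSpace ℝ (Fin q))) (hYne : Y.Nonempty)
    (hYcomp : IsCompact Y) (hYconv : Convex ℝ Y)
    (g : EuclideanSpace ℝ (Fin p) × EuclideanSpace ℝ (Fin q) → ℝ) (L : ℝ) (hL : 0 < L)
    (hdx : ∀ y, Differentiable ℝ fun x => g (x, y))
    (hdy : ∀ x, Differentiable ℝ fun y => g (x, y))
    (hsmooth : ∀ x y x' y',
      ‖gradient (fun z => g (z, y)) x - gradient (fun z => g (z, y')) x'‖ ≤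
          L * (‖x - x'‖ + ‖y - y'‖) ∧
      ‖gradient (fun z => g (x, z)) y - gradient (fun z => g (x', z)) y'‖ ≤
          L * (‖x - x'‖ + ‖y - y'‖))
    (hconc : ∀ x, ConcaveOn ℝ Y fun y => g (x, y))
    (f : EuclideanSpace ℝ (Fin p) → ℝ)
    (hf : ∀ x, f x = sSup ((fun y => g (x, y)) '' Y))
    (fstar : ℝ) (hlb : ∀ x, fstar ≤ f x)
    (ε : ℝ) (hε : 0 < ε)
    (x : ℕ → EuclideanSpace ℝ (Fin p))
    (hstep : ∀ k, f (x (k + 1)) + L * ‖x (k + 1) - x k‖ ^ 2 ≤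
        (⨅ x' : EuclideanSpace ℝ (Fin p), f x' + L * ‖x' - x k‖ ^ 2) +
          ε ^ 2 / (64 * L) / 4) :
    (∃ k ≤ ⌈(4 : ℝ) ^ 4 * L * (f (x 0) - fstar) / (3 * ε ^ 2)⌉₊,
      f (x k) - 3 * (ε ^ 2 / (64 * L)) / 4 ≤ f (x (k + 1)) + L * ‖x (k + 1) - x k‖ ^ 2) ∧
    (∀ k, f (x k) - 3 * (ε ^ 2 / (64 * L)) / 4 ≤ f (x (k + 1)) + L * ‖x (k + 1) - x k‖ ^ 2 →
      ‖gradient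
          (fun v => ⨅ x' : EuclideanSpace ℝ (Fin p), f x' + L * ‖v - x'‖ ^ 2) (x k)‖ ≤ ε) :=
  stmt_17_general Y hYne hYcomp g L hL hdx hdy hsmooth f hf fstar hlb ε hε x hstep
end
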